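/- arXiv:1710.02882 — 7 statements merged into one kernel-verified Lean document; each statement's English description precedes it below -/
import Mathlib

section
/- For every n, the detection error probability satisfies P_e^{(n)} ≤ E[ exp( −C_p (√n (X̄_n − S))² ) ], where C_p = (1−2p)²/2. -/
/-!
Given `X = x`, the deviations `Y i - (1 - 2p) x i` are independent, centred, and range over an
interval of length 2, so by Hoeffding's lemma their sum `D` has moment generating function at
most `exp (n t² / 2)`. With `a = X̄ - S`, a detection error means `a D < -(1 - 2p) n a²`, and the
Chernoff bound at `t = -(1 - 2p) a` bounds the conditional error probability by
`exp (-(1 - 2p)² n a² / 2)`. Averaging over `X` gives the claim.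
-/

open MeasureTheory ProbabilityTheory Real

lemma two_point_mgf_le {q a b : ℝ} (hq0 : 0 ≤ q) (hq1 : q ≤ 1)
    (hmean : q * a + (1 - q) * b = 0) (t : ℝ) :
    q * exp (t * a) + (1 - q) * exp (t * b) ≤ exp ((a - b) ^ 2 / 8 * t ^ 2) := by
  set μ : Measure ℝ :=
    ENNReal.ofReal q • Measure.dirac a + ENNReal.ofReal (1 - q) • Measure.dirac b with hμ_def
  have hμ : IsProbabilityMeasure μ := ⟨by
    simp [μ, ← ENNReal.ofReal_add hq0 (sub_nonneg.2 hq1)]⟩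
  have hint (r x : ℝ) (f : ℝ → ℝ) : Integrable f (ENNReal.ofReal r • Measure.dirac x) :=
    (integrable_dirac enorm_lt_top).smul_measure ENNReal.ofReal_ne_top
  have hintegral (f : ℝ → ℝ) : ∫ x, f x ∂μ = q * f a + (1 - q) * f b := by
    rw [hμ_def, integral_add_measure (hint _ _ f) (hint _ _ f), integral_smul_measure,
      integral_smul_measure, integral_dirac, integral_dirac, ENNReal.toReal_ofReal hq0,
      ENNReal.toReal_ofReal (sub_nonneg.2 hq1), smul_eq_mul, smul_eq_mul]
  have hsupp : ∀ᵐ x ∂μ, x ∈ Set.Icc (min a b) (max a b) := by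
    rw [hμ_def, ae_add_measure_iff]
    exact ⟨Measure.ae_smul_measure
        ((ae_dirac_iff measurableSet_Icc).2 ⟨min_le_left _ _, le_max_left _ _⟩) _,
      Measure.ae_smul_measure
        ((ae_dirac_iff measurableSet_Icc).2 ⟨min_le_right _ _, le_max_right _ _⟩) _⟩
  have hmgf := (hasSubgaussianMGF_of_mem_Icc_of_integral_eq_zero (X := id) aemeasurable_id hsupp
    (by rw [← hmean]; exact hintegral id)).mgf_le t
  rw [mgf, hintegral] at hmgf
  refine hmgf.trans_eq (congrArg exp ?_)
  simp only [max_sub_min_eq_abs', nnnorm_abs, NNReal.coe_pow, NNReal.coe_div, coe_nnnorm,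
    norm_eq_abs, NNReal.coe_ofNat]
  rw [div_pow, sq_abs]
  ring

open Finset

section SignVectors

variable {ι : Type*} [Fintype ι] [DecidableEq ι]

variable (ι) in
noncomputable def signVectors : Finset (ι → ℝ) := Fintype.piFinset fun _ => {1, -1}

lemma mem_signVectors {y : ι → ℝ} : y ∈ signVectors ι ↔ ∀ i, y i = 1 ∨ y i = -1 := by
  simp [signVectors]

/-- `P(Y = y | X = x)` in the sentiment detection model. -/
noncomputable def flipProb (p : ℝ) (x y : ι → ℝ) : ℝ := ∏ i, if y i = x i then 1 - p else p

lemma sum_flip_mul_exp_le {p v₀ : ℝ} (hp0 : 0 ≤ p) (hp1 : p ≤ 1) (hv₀ : v₀ = 1 ∨ v₀ = -1)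
    (t : ℝ) :
    ∑ v ∈ ({1, -1} : Finset ℝ), (if v = v₀ then 1 - p else p) * exp (t * (v - (1 - 2 * p) * v₀))
      ≤ exp (t ^ 2 / 2) := by
  rw [sum_pair (by norm_num)]
  rcases hv₀ with rfl | rfl
  · have h := two_point_mgf_le (q := 1 - p) (a := 2 * p) (b := -2 * (1 - p)) (by linarith)
      (by linarith) (by ring) t
    rw [if_pos rfl, if_neg (by norm_num : (-1 : ℝ) ≠ 1)]
    convert h using 3 <;> ring_nf
  · have h := two_point_mgf_le (q := p) (a := 2 * (1 - p)) (b := -2 * p) hp0 hp1 (by ring) t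
    rw [if_pos rfl, if_neg (by norm_num : (1 : ℝ) ≠ -1)]
    convert h using 3 <;> ring_nf

lemma sum_flipProb_mul_exp_le {p : ℝ} (hp0 : 0 ≤ p) (hp1 : p ≤ 1) {x : ι → ℝ}
    (hx : x ∈ signVectors ι) (t : ℝ) :
    ∑ y ∈ signVectors ι, flipProb p x y * exp (t * ∑ i, (y i - (1 - 2 * p) * x i))
      ≤ exp (Fintype.card ι * t ^ 2 / 2) := by
  rw [mem_signVectors] at hx
  calc ∑ y ∈ signVectors ι, flipProb p x y * exp (t * ∑ i, (y i - (1 - 2 * p) * x i))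
      = ∑ y ∈ signVectors ι, ∏ i,
          (if y i = x i then 1 - p else p) * exp (t * (y i - (1 - 2 * p) * x i)) := by
        simp only [flipProb, mul_sum, exp_sum, prod_mul_distrib]
    _ = ∏ i, ∑ v ∈ ({1, -1} : Finset ℝ),
          (if v = x i then 1 - p else p) * exp (t * (v - (1 - 2 * p) * x i)) := by
        rw [prod_univ_sum, signVectors]
    _ ≤ ∏ _i : ι, exp (t ^ 2 / 2) := by
        refine prod_le_prod (fun i _ => sum_nonneg fun v _ => ?_)
          (fun i _ => sum_flip_mul_exp_le hp0 hp1 (hx i) t)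
        have : 0 ≤ if v = x i then 1 - p else p := by split_ifs <;> linarith
        positivity
    _ = exp (Fintype.card ι * t ^ 2 / 2) := by
        rw [prod_const, card_univ, ← exp_nat_mul]
        ring_nf

lemma sum_flipProb_error_le {p : ℝ} (hp0 : 0 ≤ p) (hp1 : p < 1 / 2) {x : ι → ℝ}
    (hx : x ∈ signVectors ι) (S : ℝ) :
    ∑ y ∈ signVectors ι,
        (if ((∑ i, x i) / Fintype.card ι - S) *
            ((∑ i, y i) / Fintype.card ι - (1 - 2 * p) * S) < 0 then flipProb p x y else 0)
      ≤ exp (-((1 - 2 * p) ^ 2 / 2) *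
          (√(Fintype.card ι) * ((∑ i, x i) / Fintype.card ι - S)) ^ 2) := by
  set n : ℝ := (Fintype.card ι : ℝ)
  set L := 1 - 2 * p
  set a := (∑ i, x i) / n - S with ha
  have hL : 0 < L := by linarith
  have hchernoff : ∀ y ∈ signVectors ι,
      (if a * ((∑ i, y i) / n - L * S) < 0 then flipProb p x y else 0)
        ≤ exp (-(L ^ 2 * n * a ^ 2)) *
          (flipProb p x y * exp (-(L * a) * ∑ i, (y i - L * x i))) := by
    intro y _
    have hw : 0 ≤ flipProb p x y := prod_nonneg fun i _ => by split_ifs <;> linarith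
    split_ifs with herr
    · have hmean (f : ι → ℝ) : n * ((∑ i, f i) / n) = ∑ i, f i := by
        rcases isEmpty_or_nonempty ι with _ | _
        · simp
        · exact mul_div_cancel₀ _ (Nat.cast_ne_zero.2 Fintype.card_ne_zero)
      have hdev : -(L * a) * ∑ i, (y i - L * x i)
          = L ^ 2 * n * a ^ 2 - L * n * (a * ((∑ i, y i) / n - L * S)) := by
        rw [sum_sub_distrib, ← mul_sum]
        linear_combination (L * a) * hmean y - L ^ 2 * a * hmean x + L ^ 2 * n * a * ha
      have hexp : 1 ≤ exp (-(L ^ 2 * n * a ^ 2)) * exp (-(L * a) * ∑ i, (y i - L * x i)) := by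
        rw [← exp_add, hdev, one_le_exp_iff]
        nlinarith [mul_nonneg hL.le (Nat.cast_nonneg (Fintype.card ι) : (0 : ℝ) ≤ n)]
      calc flipProb p x y ≤ flipProb p x y * (exp (-(L ^ 2 * n * a ^ 2)) *
            exp (-(L * a) * ∑ i, (y i - L * x i))) := le_mul_of_one_le_right hw hexp
        _ = _ := by ring
    · positivity
  calc _ ≤ ∑ y ∈ signVectors ι, exp (-(L ^ 2 * n * a ^ 2)) *
          (flipProb p x y * exp (-(L * a) * ∑ i, (y i - L * x i))) := sum_le_sum hchernoff
    _ ≤ exp (-(L ^ 2 * n * a ^ 2)) * exp (n * (-(L * a)) ^ 2 / 2) := by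
        rw [← mul_sum]
        gcongr
        exact sum_flipProb_mul_exp_le hp0 (by linarith) hx _
    _ = _ := by
        rw [← exp_add, mul_pow, sq_sqrt (by positivity : (0 : ℝ) ≤ n)]
        ring_nf

end SignVectors

section FiniteRange

variable {Ω β : Type*} [MeasurableSpace Ω] [MeasurableSpace β] [MeasurableSingletonClass β]
  (μ : Measure Ω) [IsFiniteMeasure μ] {Z : Ω → β} {s : Finset β}

lemma measureReal_preimage_eq_sum_of_forall_mem (hZ : Measurable Z) (hs : ∀ ω, Z ω ∈ s)
    (T : Set β) [DecidablePred (· ∈ T)] :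
    μ.real (Z ⁻¹' T) = ∑ z ∈ s, if z ∈ T then μ.real (Z ⁻¹' {z}) else 0 := by
  rw [← sum_filter, sum_measureReal_preimage_singleton _ fun z _ => hZ (measurableSet_singleton z)]
  congr 1
  ext ω
  simp [hs ω]

lemma integral_comp_eq_sum_of_forall_mem (hZ : Measurable Z) (hs : ∀ ω, Z ω ∈ s) (g : β → ℝ) :
    ∫ ω, g (Z ω) ∂μ = ∑ z ∈ s, μ.real (Z ⁻¹' {z}) * g z := by
  have hg : (fun ω => g (Z ω)) = fun ω => ∑ z ∈ s, (Z ⁻¹' {z}).indicator (fun _ => g z) ω := by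
    ext ω
    rw [sum_eq_single_of_mem (Z ω) (hs ω)]
    · simp
    · intro z _ hz
      simp [Ne.symm hz]
  have hmeas (z : β) : MeasurableSet (Z ⁻¹' {z}) := hZ (measurableSet_singleton z)
  rw [hg, integral_finsetSum _ fun z _ => (integrable_const _).indicator (hmeas z)]
  simp only [integral_indicator_const _ (hmeas _), smul_eq_mul]

end FiniteRange

theorem supermajority_error_hoeffding_bound_general
    {Ω : Type*} [MeasurableSpace Ω] (P : Measure Ω) [IsProbabilityMeasure P]
    (p S : ℝ) (hp0 : 0 < p) (hp1 : p < 1 / 2)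
    (X Y : (n : ℕ) → Ω → Fin n → ℝ)
    (hXval : ∀ n ω i, X n ω i = 1 ∨ X n ω i = -1)
    (hYval : ∀ n ω i, Y n ω i = 1 ∨ Y n ω i = -1)
    (hXmeas : ∀ n, Measurable (X n))
    (hYmeas : ∀ n, Measurable (Y n))
    (hjoint : ∀ n (x y : Fin n → ℝ), (∀ i, x i = 1 ∨ x i = -1) →
      (∀ i, y i = 1 ∨ y i = -1) →
      (P {ω | X n ω = x ∧ Y n ω = y}).toReal
        = (P {ω | X n ω = x}).toReal * ∏ i, (if y i = x i then 1 - p else p))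
    (n : ℕ) :
    (P {ω | ((∑ i, X n ω i) / n - S) * ((∑ i, Y n ω i) / n - (1 - 2 * p) * S) < 0}).toReal
      ≤ ∫ ω, Real.exp (-((1 - 2 * p) ^ 2 / 2) *
          (Real.sqrt n * ((∑ i, X n ω i) / n - S)) ^ 2) ∂P := by
  set V := signVectors (Fin n)
  have hXV ω : X n ω ∈ V := mem_signVectors.2 (hXval n ω)
  have hYV ω : Y n ω ∈ V := mem_signVectors.2 (hYval n ω)
  calc P.real ((fun ω => (X n ω, Y n ω)) ⁻¹'
          {z | ((∑ i, z.1 i) / n - S) * ((∑ i, z.2 i) / n - (1 - 2 * p) * S) < 0})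
      = ∑ x ∈ V, P.real (X n ⁻¹' {x}) * ∑ y ∈ V,
          if ((∑ i, x i) / n - S) * ((∑ i, y i) / n - (1 - 2 * p) * S) < 0
          then flipProb p x y else 0 := by
        rw [measureReal_preimage_eq_sum_of_forall_mem P ((hXmeas n).prodMk (hYmeas n))
          (s := V ×ˢ V) (fun ω => mem_product.2 ⟨hXV ω, hYV ω⟩), sum_product]
        refine sum_congr rfl fun x hx => ?_
        rw [mul_sum]
        refine sum_congr rfl fun y hy => ?_
        have hpair : (fun ω => (X n ω, Y n ω)) ⁻¹' {(x, y)} = {ω | X n ω = x ∧ Y n ω = y} := by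
          ext; simp [Prod.ext_iff]
        rw [hpair, measureReal_def, hjoint n x y (mem_signVectors.1 hx) (mem_signVectors.1 hy)]
        simp only [Set.mem_ofPred_eq]
        split_ifs
        · rfl
        · rw [mul_zero]
    _ ≤ ∑ x ∈ V, P.real (X n ⁻¹' {x}) * exp (-((1 - 2 * p) ^ 2 / 2) *
          (√n * ((∑ i, x i) / n - S)) ^ 2) := by
        refine sum_le_sum fun x hx => mul_le_mul_of_nonneg_left ?_ measureReal_nonneg
        simpa only [Fintype.card_fin] using sum_flipProb_error_le hp0.le hp1 hx S
    _ = _ := (integral_comp_eq_sum_of_forall_mem P (hXmeas n) hXV _).symm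

/-- In the sentiment detection model (sentiments `X n` valued in `{-1,1}^n`,
measurements `Y n` conditionally independent given `X n` with crossover probability `p`),
for every `n` the detection error probability satisfies
`P_e^{(n)} ≤ E[exp(-C_p (√n (X̄_n - S))²)]` with `C_p = (1-2p)²/2`. -/
theorem supermajority_error_hoeffding_bound
    {Ω : Type*} [MeasurableSpace Ω] (P : Measure Ω) [IsProbabilityMeasure P]
    (p S : ℝ) (hp0 : 0 < p) (hp1 : p < 1 / 2) (hS0 : -1 < S) (hS1 : S < 1)
    (X Y : (n : ℕ) → Ω → Fin n → ℝ)
    (hXval : ∀ n ω i, X n ω i = 1 ∨ X n ω i = -1)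
    (hYval : ∀ n ω i, Y n ω i = 1 ∨ Y n ω i = -1)
    (hXmeas : ∀ n, Measurable (X n))
    (hYmeas : ∀ n, Measurable (Y n))
    (hjoint : ∀ n (x y : Fin n → ℝ), (∀ i, x i = 1 ∨ x i = -1) →
      (∀ i, y i = 1 ∨ y i = -1) →
      (P {ω | X n ω = x ∧ Y n ω = y}).toReal
        = (P {ω | X n ω = x}).toReal * ∏ i, (if y i = x i then 1 - p else p))
    (n : ℕ) :
    (P {ω | ((∑ i, X n ω i) / n - S) * ((∑ i, Y n ω i) / n - (1 - 2 * p) * S) < 0}).toReal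
      ≤ ∫ ω, Real.exp (-((1 - 2 * p) ^ 2 / 2) *
          (Real.sqrt n * ((∑ i, X n ω i) / n - S)) ^ 2) ∂P :=
  supermajority_error_hoeffding_bound_general P p S hp0 hp1 X Y hXval hYval hXmeas hYmeas hjoint n
end

section
/- For every n and every sampling probability δ ∈ (0,1], the partial-observation detection error probability satisfies P_{e;δ}^{(n)} ≤ E[ exp( −δ² C_p (√n (X̄_n − S))² ) ], where C_p = (1−2p)²/2. -/
/-!
Conditionally on `X = x`, the partial observations `Y_{i;δ}` are independent, take values in
`[-1, 1]` and have means `m x_i` with `m = δ(1 - 2p)`. By Hoeffding's lemma each one is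
sub-Gaussian with variance proxy `1`, so the Chernoff bound with exponent `-m (x̄ - S)` bounds
the conditional error probability by `exp(-n m² (x̄ - S)² / 2)`. Averaging over `X` gives the
bound.
-/

open MeasureTheory ProbabilityTheory Real

theorem sum_mul_exp_le_of_mem_Icc {s : Finset ℝ} {q : ℝ → ℝ} (hq : ∀ v ∈ s, 0 ≤ q v)
    (hq1 : ∑ v ∈ s, q v = 1) {a b : ℝ} (hs : ∀ v ∈ s, v ∈ Set.Icc a b) (t : ℝ) :
    ∑ v ∈ s, q v * exp (t * v)
      ≤ exp (t * ∑ v ∈ s, q v * v + ((b - a) / 2) ^ 2 * t ^ 2 / 2) := by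
  set μ : Measure ℝ := ∑ v ∈ s, ENNReal.ofReal (q v) • Measure.dirac v
  have hμ (f : ℝ → ℝ) : ∫ x, f x ∂μ = ∑ v ∈ s, q v * f v := by
    rw [integral_finsetSum_measure fun v _ => (integrable_dirac enorm_lt_top).smul_measure
      ENNReal.ofReal_ne_top]
    refine Finset.sum_congr rfl fun v hv => ?_
    rw [integral_smul_measure, integral_dirac, ENNReal.toReal_ofReal (hq v hv), smul_eq_mul]
  have : IsProbabilityMeasure μ := ⟨by
    simp only [μ, Measure.coe_finsetSum, Measure.smul_apply, Finset.sum_apply,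
      measure_univ, smul_eq_mul, mul_one]
    rw [← ENNReal.ofReal_sum_of_nonneg hq, hq1, ENNReal.ofReal_one]⟩
  have hIcc : ∀ᵐ x ∂μ, x ∈ Set.Icc a b := by
    rw [ae_iff]
    simp only [μ, Measure.coe_finsetSum, Measure.smul_apply, Finset.sum_apply, smul_eq_mul]
    refine Finset.sum_eq_zero fun v hv => ?_
    change _ * Measure.dirac v (Set.Icc a b)ᶜ = 0
    rw [Measure.dirac_apply' _ measurableSet_Icc.compl, Set.indicator_of_notMem, mul_zero]
    simpa using hs v hv
  obtain ⟨v₀, hv₀⟩ : s.Nonempty := Finset.nonempty_of_sum_ne_zero (by rw [hq1]; norm_num)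
  have hab : a ≤ b := (hs v₀ hv₀).1.trans (hs v₀ hv₀).2
  have hmgf := (hasSubgaussianMGF_of_mem_Icc aemeasurable_id hIcc).mgf_le t
  simp only [mgf, id, hμ] at hmgf
  have hnorm : ((‖b - a‖₊ / 2) ^ 2 : NNReal) = ((b - a) / 2) ^ 2 := by
    simp [Real.nnnorm_of_nonneg (sub_nonneg.2 hab)]
  rw [hnorm] at hmgf
  set m := ∑ v ∈ s, q v * v
  calc ∑ v ∈ s, q v * exp (t * v) = exp (t * m) * ∑ v ∈ s, q v * exp (t * (v - m)) := by
        rw [Finset.mul_sum]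
        refine Finset.sum_congr rfl fun v _ => ?_
        rw [mul_left_comm, ← exp_add]
        ring_nf
    _ ≤ exp (t * m) * exp (((b - a) / 2) ^ 2 * t ^ 2 / 2) := by gcongr
    _ = _ := (exp_add _ _).symm

theorem sum_piFinset_ite_mul_prod_le {n : ℕ} (V : Finset ℝ) (q : Fin n → ℝ → ℝ)
    (hq : ∀ i, ∀ v ∈ V, 0 ≤ q i v) (A : ℝ → Prop) [DecidablePred A] {l c : ℝ}
    (hA : ∀ s, A s → c ≤ l * s) :
    ∑ w ∈ Fintype.piFinset (fun _ => V), (if A (∑ i, w i) then 1 else 0) * ∏ i, q i (w i)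
      ≤ exp (-c) * ∏ i, ∑ v ∈ V, q i v * exp (l * v) := by
  rw [Finset.prod_univ_sum, Finset.mul_sum]
  refine Finset.sum_le_sum fun w hw => ?_
  have hqw : 0 ≤ ∏ i, q i (w i) :=
    Finset.prod_nonneg fun i _ => hq i (w i) (Fintype.mem_piFinset.1 hw i)
  have hexp : (if A (∑ i, w i) then 1 else 0) ≤ exp (l * ∑ i, w i - c) := by
    split_ifs with h
    · exact one_le_exp (sub_nonneg.2 (hA _ h))
    · exact (exp_pos _).le
  calc (if A (∑ i, w i) then 1 else 0) * ∏ i, q i (w i)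
      ≤ exp (l * ∑ i, w i - c) * ∏ i, q i (w i) := by gcongr
    _ = exp (-c) * ∏ i, q i (w i) * exp (l * w i) := by
        rw [Finset.prod_mul_distrib, ← exp_sum, ← Finset.mul_sum, sub_eq_neg_add, exp_add]
        ring

/-- `P(Y_{i;δ} = w | X_i = x)`, summing over the value `y` of the noisy sentiment `Y_i`. -/
noncomputable def partialObsProb (p δ x w : ℝ) : ℝ :=
  ∑ y ∈ ({1, -1} : Finset ℝ),
    (if y = x then 1 - p else p) * (if w = y then δ else if w = 0 then 1 - δ else 0)

theorem partialObsProb_nonneg {p δ : ℝ} (hp0 : 0 ≤ p) (hp1 : p ≤ 1) (hδ0 : 0 ≤ δ) (hδ1 : δ ≤ 1)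
    (x w : ℝ) : 0 ≤ partialObsProb p δ x w := by
  unfold partialObsProb
  refine Finset.sum_nonneg fun y _ => mul_nonneg ?_ ?_ <;> split_ifs <;> linarith

theorem sum_partialObsProb {p δ x : ℝ} (hx : x = 1 ∨ x = -1) :
    ∑ w ∈ ({1, -1, 0} : Finset ℝ), partialObsProb p δ x w = 1 := by
  rcases hx with rfl | rfl <;> norm_num [partialObsProb] <;> ring

theorem sum_mul_partialObsProb {p δ x : ℝ} (hx : x = 1 ∨ x = -1) :
    ∑ w ∈ ({1, -1, 0} : Finset ℝ), partialObsProb p δ x w * w = δ * (1 - 2 * p) * x := by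
  rcases hx with rfl | rfl <;> norm_num [partialObsProb] <;> ring

theorem sum_partialObsProb_mul_exp_le {p δ x : ℝ} (hp0 : 0 ≤ p) (hp1 : p ≤ 1) (hδ0 : 0 ≤ δ)
    (hδ1 : δ ≤ 1) (hx : x = 1 ∨ x = -1) (t : ℝ) :
    ∑ w ∈ ({1, -1, 0} : Finset ℝ), partialObsProb p δ x w * exp (t * w)
      ≤ exp (t * (δ * (1 - 2 * p) * x) + t ^ 2 / 2) := by
  have h := sum_mul_exp_le_of_mem_Icc (fun w _ => partialObsProb_nonneg hp0 hp1 hδ0 hδ1 x w)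
    (sum_partialObsProb hx) (a := -1) (b := 1) (by norm_num) t
  rwa [sum_mul_partialObsProb hx, show ((1 - -1) / 2 : ℝ) ^ 2 = 1 by norm_num, one_mul] at h

theorem sum_partialObsProb_error_le {p δ S : ℝ} (hp0 : 0 ≤ p) (hp1 : p ≤ 1 / 2) (hδ0 : 0 ≤ δ)
    (hδ1 : δ ≤ 1) {n : ℕ} (x : Fin n → ℝ) (hx : ∀ i, x i = 1 ∨ x i = -1) :
    ∑ w ∈ Fintype.piFinset (fun _ : Fin n => ({1, -1, 0} : Finset ℝ)),
      (if ((∑ i, x i) / n - S) * ((∑ i, w i) / n - δ * (1 - 2 * p) * S) < 0 then 1 else 0)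
        * ∏ i, partialObsProb p δ (x i) (w i)
      ≤ exp (-(δ ^ 2 * ((1 - 2 * p) ^ 2 / 2)) * (√n * ((∑ i, x i) / n - S)) ^ 2) := by
  set m := δ * (1 - 2 * p)
  have hm : 0 ≤ m := mul_nonneg hδ0 (by linarith)
  set d := (∑ i, x i) / n - S
  have hsum : ∑ i, x i = n * (d + S) := by
    rcases eq_or_ne n 0 with rfl | hn
    · simp
    · simp only [d]; field_simp; ring
  -- the Chernoff exponent that minimises the resulting Gaussian bound
  set l := -(m * d)
  have hA : ∀ s : ℝ, d * (s / n - m * S) < 0 → l * (n * (m * S)) ≤ l * s := by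
    intro s hs
    rcases eq_or_ne n 0 with rfl | hn
    -- for `n = 0` both averages are `0` (division by zero), and the event is empty
    · simp only [CharP.cast_eq_zero, div_zero, zero_sub, d] at hs
      nlinarith [mul_nonneg hm (sq_nonneg S)]
    · have : l * s - l * (n * (m * S)) = -(n * m) * (d * (s / n - m * S)) := by
        simp only [l]; field_simp; ring
      nlinarith [mul_nonneg (Nat.cast_nonneg n) hm]
  calc _ ≤ exp (-(l * (n * (m * S)))) * ∏ i, ∑ w ∈ ({1, -1, 0} : Finset ℝ),
          partialObsProb p δ (x i) w * exp (l * w) :=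
        sum_piFinset_ite_mul_prod_le _ _
          (fun i w _ => partialObsProb_nonneg hp0 (by linarith) hδ0 hδ1 _ _) _ hA
    _ ≤ exp (-(l * (n * (m * S)))) * ∏ i, exp (l * (m * x i) + l ^ 2 / 2) := by
        gcongr with i
        · exact fun i _ => Finset.sum_nonneg fun w _ =>
            mul_nonneg (partialObsProb_nonneg hp0 (by linarith) hδ0 hδ1 _ _) (exp_pos _).le
        · exact sum_partialObsProb_mul_exp_le hp0 (by linarith) hδ0 hδ1 (hx i) l
    _ = _ := by
        rw [← exp_sum, ← exp_add, Finset.sum_add_distrib, ← Finset.mul_sum, ← Finset.mul_sum,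
          hsum, Finset.sum_const, Finset.card_univ, Fintype.card_fin, nsmul_eq_mul, mul_pow,
          Real.sq_sqrt (Nat.cast_nonneg n)]
        simp only [l, m]
        ring_nf

section FiniteRange

variable {Ω α : Type*} [MeasurableSpace Ω] [MeasurableSpace α] [MeasurableSingletonClass α]
  (μ : Measure Ω) [IsFiniteMeasure μ] {Z : Ω → α} {T : Finset α}

theorem toReal_measure_eq_sum_inter_preimage (hZ : Measurable Z) (hT : ∀ ω, Z ω ∈ T)
    (E : Set Ω) :
    (μ E).toReal = ∑ t ∈ T, (μ (E ∩ Z ⁻¹' {t})).toReal := by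
  have hfiber (t : α) : MeasurableSet (Z ⁻¹' {t}) := hZ (measurableSet_singleton t)
  have hcover : Z ⁻¹' T = Set.univ := Set.eq_univ_of_forall hT
  rw [← ENNReal.toReal_sum fun _ _ => measure_ne_top _ _, ← Measure.restrict_apply_univ,
    ← hcover, ← sum_measure_preimage_singleton T fun t _ => hfiber t]
  simp_rw [Measure.restrict_apply (hfiber _), Set.inter_comm]

theorem toReal_measure_setOf_eq_sum (hZ : Measurable Z) (hT : ∀ ω, Z ω ∈ T)
    (R : α → Prop) [DecidablePred R] :
    (μ {ω | R (Z ω)}).toReal = ∑ t ∈ T, if R t then (μ (Z ⁻¹' {t})).toReal else 0 := by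
  rw [toReal_measure_eq_sum_inter_preimage μ hZ hT]
  refine Finset.sum_congr rfl fun t _ => ?_
  split_ifs with h
  · congr 2
    ext ω
    simp only [Set.mem_inter_iff, Set.mem_ofPred_eq, Set.mem_preimage, Set.mem_singleton_iff]
    exact ⟨And.right, fun h' => ⟨h' ▸ h, h'⟩⟩
  · have hempty : {ω | R (Z ω)} ∩ Z ⁻¹' {t} = ∅ :=
      Set.eq_empty_of_forall_notMem fun ω ⟨hR, (h' : Z ω = t)⟩ => h (h' ▸ hR)
    rw [hempty, measure_empty, ENNReal.toReal_zero]

theorem toReal_measure_setOf_eq_sum_sum {β : Type*} [MeasurableSpace β]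
    [MeasurableSingletonClass β] {V : Ω → β} {U : Finset β} (hZ : Measurable Z)
    (hT : ∀ ω, Z ω ∈ T) (hV : Measurable V) (hU : ∀ ω, V ω ∈ U) (R : α → β → Prop)
    [∀ t u, Decidable (R t u)] :
    (μ {ω | R (Z ω) (V ω)}).toReal
      = ∑ t ∈ T, ∑ u ∈ U, if R t u then (μ {ω | Z ω = t ∧ V ω = u}).toReal else 0 := by
  rw [toReal_measure_setOf_eq_sum μ (hZ.prodMk hV) (fun ω => Finset.mem_product.2 ⟨hT ω, hU ω⟩)
    fun tu => R tu.1 tu.2, Finset.sum_product]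
  simp only [Set.preimage, Set.mem_singleton_iff, Prod.ext_iff]

theorem integral_comp_eq_sum (hZ : Measurable Z) (hT : ∀ ω, Z ω ∈ T) {E : Type*}
    [NormedAddCommGroup E] [NormedSpace ℝ E] [CompleteSpace E] (g : α → E) :
    ∫ ω, g (Z ω) ∂μ = ∑ t ∈ T, (μ (Z ⁻¹' {t})).toReal • g t := by
  have hfiber (t : α) : MeasurableSet (Z ⁻¹' {t}) := hZ (measurableSet_singleton t)
  have hg : (fun ω => g (Z ω)) = fun ω => ∑ t ∈ T, (Z ⁻¹' {t}).indicator (fun _ => g t) ω := by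
    funext ω
    rw [Finset.sum_eq_single_of_mem (Z ω) (hT ω) fun t _ ht => ?_]
    · simp
    · exact Set.indicator_of_notMem (fun h => ht h.symm) _
  rw [hg, integral_finsetSum _ fun t _ => (integrable_const _).indicator (hfiber t)]
  simp_rw [integral_indicator_const _ (hfiber _), measureReal_def]

end FiniteRange

theorem toReal_measure_eq_mul_prod_partialObsProb {Ω : Type*} [MeasurableSpace Ω]
    (μ : Measure Ω) [IsFiniteMeasure μ] {p δ : ℝ} {n : ℕ} {X Y W : Ω → Fin n → ℝ}
    (hY : Measurable Y) (hYval : ∀ ω i, Y ω i = 1 ∨ Y ω i = -1) {x w : Fin n → ℝ}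
    (hjoint : ∀ y : Fin n → ℝ, (∀ i, y i = 1 ∨ y i = -1) →
      (μ {ω | X ω = x ∧ Y ω = y}).toReal
        = (μ {ω | X ω = x}).toReal * ∏ i, (if y i = x i then 1 - p else p))
    (hpartial : ∀ y : Fin n → ℝ, (∀ i, y i = 1 ∨ y i = -1) →
      (μ {ω | X ω = x ∧ Y ω = y ∧ W ω = w}).toReal
        = (μ {ω | X ω = x ∧ Y ω = y}).toReal *
            ∏ i, (if w i = y i then δ else if w i = 0 then 1 - δ else 0)) :
    (μ {ω | X ω = x ∧ W ω = w}).toReal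
      = (μ {ω | X ω = x}).toReal * ∏ i, partialObsProb p δ (x i) (w i) := by
  set T := Fintype.piFinset fun _ : Fin n => ({1, -1} : Finset ℝ)
  have hmem : ∀ y ∈ T, ∀ i, y i = 1 ∨ y i = -1 := fun y hy i => by
    simpa using Fintype.mem_piFinset.1 hy i
  have hcell : ∀ y ∈ T, {ω | X ω = x ∧ W ω = w} ∩ Y ⁻¹' {y}
      = {ω | X ω = x ∧ Y ω = y ∧ W ω = w} := fun y _ => by
    ext ω
    simp only [Set.mem_inter_iff, Set.mem_ofPred_eq, Set.mem_preimage, Set.mem_singleton_iff]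
    tauto
  rw [toReal_measure_eq_sum_inter_preimage μ hY (T := T)
      (fun ω => Fintype.mem_piFinset.2 fun i => by simpa using hYval ω i),
    Finset.sum_congr rfl fun y hy => by
      rw [hcell y hy, hpartial y (hmem y hy), hjoint y (hmem y hy), mul_assoc,
        ← Finset.prod_mul_distrib],
    ← Finset.mul_sum]
  simp only [partialObsProb, Finset.prod_univ_sum, T]

theorem supermajority_error_partial_observation_bound_general
    {Ω : Type*} [MeasurableSpace Ω] (P : Measure Ω) [IsProbabilityMeasure P]
    (p S δ : ℝ) (hp0 : 0 < p) (hp1 : p < 1 / 2)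
    (hδ0 : 0 < δ) (hδ1 : δ ≤ 1)
    (X Y W : (n : ℕ) → Ω → Fin n → ℝ)
    (hXval : ∀ n ω i, X n ω i = 1 ∨ X n ω i = -1)
    (hYval : ∀ n ω i, Y n ω i = 1 ∨ Y n ω i = -1)
    (hWval : ∀ n ω i, W n ω i = 1 ∨ W n ω i = -1 ∨ W n ω i = 0)
    (hXmeas : ∀ n, Measurable (X n))
    (hYmeas : ∀ n, Measurable (Y n))
    (hWmeas : ∀ n, Measurable (W n))
    (hjoint : ∀ n (x y : Fin n → ℝ), (∀ i, x i = 1 ∨ x i = -1) →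
      (∀ i, y i = 1 ∨ y i = -1) →
      (P {ω | X n ω = x ∧ Y n ω = y}).toReal
        = (P {ω | X n ω = x}).toReal * ∏ i, (if y i = x i then 1 - p else p))
    (hpartial : ∀ n (x y w : Fin n → ℝ), (∀ i, x i = 1 ∨ x i = -1) →
      (∀ i, y i = 1 ∨ y i = -1) → (∀ i, w i = 1 ∨ w i = -1 ∨ w i = 0) →
      (P {ω | X n ω = x ∧ Y n ω = y ∧ W n ω = w}).toReal
        = (P {ω | X n ω = x ∧ Y n ω = y}).toReal *
            ∏ i, (if w i = y i then δ else if w i = 0 then 1 - δ else 0))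
    (n : ℕ) :
    (P {ω | ((∑ i, X n ω i) / n - S) * ((∑ i, W n ω i) / n - δ * (1 - 2 * p) * S) < 0}).toReal
      ≤ ∫ ω, Real.exp (-(δ ^ 2 * ((1 - 2 * p) ^ 2 / 2)) *
          (Real.sqrt n * ((∑ i, X n ω i) / n - S)) ^ 2) ∂P := by
  classical
  set T₂ := Fintype.piFinset fun _ : Fin n => ({1, -1} : Finset ℝ)
  set T₃ := Fintype.piFinset fun _ : Fin n => ({1, -1, 0} : Finset ℝ)
  have hmem₂ : ∀ x ∈ T₂, ∀ i, x i = 1 ∨ x i = -1 := fun x hx i => by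
    simpa using Fintype.mem_piFinset.1 hx i
  have hmem₃ : ∀ w ∈ T₃, ∀ i, w i = 1 ∨ w i = -1 ∨ w i = 0 := fun w hw i => by
    simpa using Fintype.mem_piFinset.1 hw i
  have hX (ω : Ω) : X n ω ∈ T₂ := Fintype.mem_piFinset.2 fun i => by simpa using hXval n ω i
  have hW (ω : Ω) : W n ω ∈ T₃ := Fintype.mem_piFinset.2 fun i => by simpa using hWval n ω i
  calc _ = ∑ x ∈ T₂, ∑ w ∈ T₃,
        if ((∑ i, x i) / n - S) * ((∑ i, w i) / n - δ * (1 - 2 * p) * S) < 0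
        then (P {ω | X n ω = x ∧ W n ω = w}).toReal else 0 :=
        toReal_measure_setOf_eq_sum_sum P (hXmeas n) hX (hWmeas n) hW
          fun x w => ((∑ i, x i) / n - S) * ((∑ i, w i) / n - δ * (1 - 2 * p) * S) < 0
    _ = ∑ x ∈ T₂, (P {ω | X n ω = x}).toReal * ∑ w ∈ T₃,
        (if ((∑ i, x i) / n - S) * ((∑ i, w i) / n - δ * (1 - 2 * p) * S) < 0 then 1 else 0)
          * ∏ i, partialObsProb p δ (x i) (w i) := by
        refine Finset.sum_congr rfl fun x hx => ?_
        rw [Finset.mul_sum]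
        refine Finset.sum_congr rfl fun w hw => ?_
        rw [toReal_measure_eq_mul_prod_partialObsProb P (hYmeas n) (hYval n)
          (hjoint n x · (hmem₂ x hx)) (hpartial n x · w (hmem₂ x hx) · (hmem₃ w hw))]
        split_ifs <;> ring
    _ ≤ ∑ x ∈ T₂, (P {ω | X n ω = x}).toReal *
          exp (-(δ ^ 2 * ((1 - 2 * p) ^ 2 / 2)) * (√n * ((∑ i, x i) / n - S)) ^ 2) := by
        gcongr with x hx
        exact sum_partialObsProb_error_le hp0.le hp1.le hδ0.le hδ1 x (hmem₂ x hx)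
    _ = _ := (integral_comp_eq_sum P (hXmeas n) hX
          fun x => exp (-(δ ^ 2 * ((1 - 2 * p) ^ 2 / 2)) * (√n * ((∑ i, x i) / n - S)) ^ 2)).symm

/-- In the sentiment detection model with partial observations
(`W n = Y_{·;δ}` keeps each measurement `Y i` independently with probability `δ` and
reports `0` otherwise), for every `n` and every sampling probability `δ ∈ (0,1]`,
the partial-observation detection error probability satisfies
`P_{e;δ}^{(n)} ≤ E[exp(-δ² C_p (√n (X̄_n - S))²)]` with `C_p = (1-2p)²/2`. -/
theorem supermajority_error_partial_observation_bound
    {Ω : Type*} [MeasurableSpace Ω] (P : Measure Ω) [IsProbabilityMeasure P]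
    (p S δ : ℝ) (hp0 : 0 < p) (hp1 : p < 1 / 2) (hS0 : -1 < S) (hS1 : S < 1)
    (hδ0 : 0 < δ) (hδ1 : δ ≤ 1)
    (X Y W : (n : ℕ) → Ω → Fin n → ℝ)
    (hXval : ∀ n ω i, X n ω i = 1 ∨ X n ω i = -1)
    (hYval : ∀ n ω i, Y n ω i = 1 ∨ Y n ω i = -1)
    (hWval : ∀ n ω i, W n ω i = 1 ∨ W n ω i = -1 ∨ W n ω i = 0)
    (hXmeas : ∀ n, Measurable (X n))
    (hYmeas : ∀ n, Measurable (Y n))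
    (hWmeas : ∀ n, Measurable (W n))
    (hjoint : ∀ n (x y : Fin n → ℝ), (∀ i, x i = 1 ∨ x i = -1) →
      (∀ i, y i = 1 ∨ y i = -1) →
      (P {ω | X n ω = x ∧ Y n ω = y}).toReal
        = (P {ω | X n ω = x}).toReal * ∏ i, (if y i = x i then 1 - p else p))
    (hpartial : ∀ n (x y w : Fin n → ℝ), (∀ i, x i = 1 ∨ x i = -1) →
      (∀ i, y i = 1 ∨ y i = -1) → (∀ i, w i = 1 ∨ w i = -1 ∨ w i = 0) →
      (P {ω | X n ω = x ∧ Y n ω = y ∧ W n ω = w}).toReal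
        = (P {ω | X n ω = x ∧ Y n ω = y}).toReal *
            ∏ i, (if w i = y i then δ else if w i = 0 then 1 - δ else 0))
    (n : ℕ) :
    (P {ω | ((∑ i, X n ω i) / n - S) * ((∑ i, W n ω i) / n - δ * (1 - 2 * p) * S) < 0}).toReal
      ≤ ∫ ω, Real.exp (-(δ ^ 2 * ((1 - 2 * p) ^ 2 / 2)) *
          (Real.sqrt n * ((∑ i, X n ω i) / n - S)) ^ 2) ∂P :=
  supermajority_error_partial_observation_bound_general P p S δ hp0 hp1 hδ0 hδ1 X Y W hXval hYval
    hWval hXmeas hYmeas hWmeas hjoint hpartial n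
end

section
/- For the Chain graph on n vertices, the free entropy density converges: lim_{n→∞} (1/n) log Z_n(β,h) = β + log( cosh(h) + √( sinh²(h) + e^{−4β} ) ), where Z_n(β,h) = ∑_{x ∈ {−1,1}^n} exp( β ∑_{i=1}^{n−1} x_i x_{i+1} + h ∑_{i=1}^n x_i ). -/
open Filter Real

/-- The spin value `±1` associated to a Boolean. -/
noncomputable def spin (b : Bool) : ℝ := if b then 1 else -1

/-- Partition function of the Ising model on the Chain (path) graph on `n` vertices:
`Z_n(β,h) = ∑_{x ∈ {-1,1}^n} exp(β ∑_{i=1}^{n-1} x_i x_{i+1} + h ∑_{i=1}^n x_i)`. -/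
noncomputable def chainZ (β h : ℝ) (n : ℕ) : ℝ :=
  ∑ σ : Fin n → Bool,
    Real.exp (β * ∑ i : Fin (n - 1),
        spin (σ ⟨i.1, lt_of_lt_of_le i.isLt (Nat.sub_le n 1)⟩) *
        spin (σ ⟨i.1 + 1, by have := i.isLt; omega⟩)
      + h * ∑ i, spin (σ i))

noncomputable def tmat (β h : ℝ) (b b' : Bool) : ℝ :=
  Real.exp (β * spin b * spin b' + h * spin b)

noncomputable def W (β h : ℝ) : ℕ → Bool → ℝ
  | 0, b => Real.exp (h * spin b)
  | (n+1), b => ∑ b', tmat β h b b' * W β h n b'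

noncomputable def lam (β h : ℝ) : ℝ :=
  Real.exp β * (Real.cosh h + Real.sqrt (Real.sinh h ^ 2 + Real.exp (-(4 * β))))

noncomputable def uvec (β h : ℝ) (b : Bool) : ℝ :=
  if b then Real.exp (-β + h) else lam β h - Real.exp (β + h)

lemma W_eq (β h : ℝ) : ∀ (n : ℕ) (b : Bool), W β h n b =
    ∑ τ : Fin n → Bool, Real.exp (β * ∑ i : Fin n,
        spin ((Fin.cons b τ : Fin (n+1) → Bool) i.castSucc) *
        spin ((Fin.cons b τ : Fin (n+1) → Bool) i.succ)
      + h * ∑ i : Fin (n+1), spin ((Fin.cons b τ : Fin (n+1) → Bool) i)) := by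
  intro n
  induction n with
  | zero =>
    intro b
    simp [W, Fin.sum_univ_one]
  | succ n ih =>
    intro b
    rw [show W β h (n+1) b = ∑ b', tmat β h b b' * W β h n b' from rfl]
    rw [← (Fin.consEquiv (fun _ : Fin (n+1) => Bool)).sum_comp]
    rw [Fintype.sum_prod_type]
    refine Finset.sum_congr rfl fun b' _ => ?_
    rw [ih b']
    rw [Finset.mul_sum]
    refine Finset.sum_congr rfl fun τ _ => ?_
    rw [tmat, ← Real.exp_add]
    congr 1
    have hc : ((Fin.consEquiv (fun _ : Fin (n+1) => Bool)) (b', τ) : Fin (n+1) → Bool)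
        = (Fin.cons b' τ : Fin (n+1) → Bool) := rfl
    rw [hc]
    set σ : Fin (n+2) → Bool := (Fin.cons b (Fin.cons b' τ : Fin (n+1) → Bool) : Fin (n+2) → Bool) with hσ
    rw [Fin.sum_univ_succ (fun i : Fin (n+1) => spin (σ i.castSucc) * spin (σ i.succ))]
    rw [Fin.sum_univ_succ (fun i : Fin (n+2) => spin (σ i))]
    have h1 : ∀ i : Fin n, σ i.succ.castSucc = (Fin.cons b' τ : Fin (n+1) → Bool) i.castSucc := by
      intro i
      rw [show (i.succ.castSucc : Fin (n+2)) = (i.castSucc).succ by ext; simp]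
      rw [hσ, Fin.cons_succ]
    have h2 : ∀ i : Fin n, σ i.succ.succ = (Fin.cons b' τ : Fin (n+1) → Bool) i.succ := by
      intro i; rw [hσ, Fin.cons_succ]
    have h3 : ∀ i : Fin (n+1), σ i.succ = (Fin.cons b' τ : Fin (n+1) → Bool) i := by
      intro i; rw [hσ, Fin.cons_succ]
    simp only [h1, h2, h3, Fin.castSucc_zero, Fin.succ_zero_eq_one]
    have h4 : σ 0 = b := rfl
    have h5 : σ 1 = b' := rfl
    rw [h4, h5]
    ring

lemma chainZ_succ (β h : ℝ) (n : ℕ) : chainZ β h (n+1) = ∑ b, W β h n b := by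
  rw [chainZ, ← (Fin.consEquiv (fun _ : Fin (n+1) => Bool)).sum_comp, Fintype.sum_prod_type]
  refine Finset.sum_congr rfl fun b _ => ?_
  rw [W_eq]
  refine Finset.sum_congr rfl fun τ _ => rfl

lemma sqrt_gt_sinh (β h : ℝ) : Real.sinh h < Real.sqrt (Real.sinh h ^ 2 + Real.exp (-(4 * β))) := by
  have hs : Real.sqrt (Real.sinh h ^ 2 + Real.exp (-(4 * β))) ^ 2
      = Real.sinh h ^ 2 + Real.exp (-(4 * β)) := Real.sq_sqrt (by positivity)
  have h0 : 0 ≤ Real.sqrt (Real.sinh h ^ 2 + Real.exp (-(4 * β))) := Real.sqrt_nonneg _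
  nlinarith [Real.exp_pos (-(4 * β))]

lemma sqrt_gt_neg_sinh (β h : ℝ) :
    -Real.sinh h < Real.sqrt (Real.sinh h ^ 2 + Real.exp (-(4 * β))) := by
  have hs : Real.sqrt (Real.sinh h ^ 2 + Real.exp (-(4 * β))) ^ 2
      = Real.sinh h ^ 2 + Real.exp (-(4 * β)) := Real.sq_sqrt (by positivity)
  have h0 : 0 ≤ Real.sqrt (Real.sinh h ^ 2 + Real.exp (-(4 * β))) := Real.sqrt_nonneg _
  nlinarith [Real.exp_pos (-(4 * β))]

lemma lam_gt_plus (β h : ℝ) : Real.exp (β + h) < lam β h := by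
  have := sqrt_gt_sinh β h
  have hch := Real.cosh_add_sinh h
  rw [lam, Real.exp_add]
  have hE := Real.exp_pos β
  nlinarith

lemma lam_gt_minus (β h : ℝ) : Real.exp (β - h) < lam β h := by
  have := sqrt_gt_neg_sinh β h
  have hch := Real.cosh_sub_sinh h
  rw [lam, show β - h = β + -h by ring, Real.exp_add]
  have hE := Real.exp_pos β
  nlinarith

lemma lam_pos (β h : ℝ) : 0 < lam β h := lt_trans (Real.exp_pos _) (lam_gt_plus β h)

lemma uvec_pos (β h : ℝ) (b : Bool) : 0 < uvec β h b := by
  cases b <;> simp [uvec]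
  · exact lam_gt_plus β h
  · exact Real.exp_pos _

lemma char_eq (β h : ℝ) :
    lam β h * lam β h - (Real.exp (β + h) + Real.exp (β - h)) * lam β h =
      Real.exp (-β - h) * Real.exp (-β + h) - Real.exp (β + h) * Real.exp (β - h) := by
  have hs : Real.sqrt (Real.sinh h ^ 2 + Real.exp (-(4 * β))) ^ 2
      = Real.sinh h ^ 2 + Real.exp (-(4 * β)) := Real.sq_sqrt (by positivity)
  have hc : Real.cosh h ^ 2 - Real.sinh h ^ 2 = 1 := Real.cosh_sq_sub_sinh_sq h
  have h1 : Real.exp (β + h) = Real.exp β * (Real.cosh h + Real.sinh h) := by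
    rw [Real.cosh_add_sinh, Real.exp_add]
  have h2 : Real.exp (β - h) = Real.exp β * (Real.cosh h - Real.sinh h) := by
    rw [Real.cosh_sub_sinh, Real.exp_sub, Real.exp_neg]
    field_simp
  have h3 : Real.exp (-β - h) = Real.exp (-β) * (Real.cosh h - Real.sinh h) := by
    rw [Real.cosh_sub_sinh, show -β - h = -β + -h by ring, Real.exp_add]
  have h4 : Real.exp (-β + h) = Real.exp (-β) * (Real.cosh h + Real.sinh h) := by
    rw [Real.cosh_add_sinh, Real.exp_add]
  have h5 : Real.exp β * Real.exp (-β) = 1 := by rw [← Real.exp_add]; simp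
  have h6 : Real.exp (-(4 * β)) = Real.exp (-β) ^ 4 := by
    rw [show -(4 * β) = (-β) + (-β) + (-β) + (-β) by ring, Real.exp_add, Real.exp_add,
      Real.exp_add]; ring
  rw [lam, h1, h2, h3, h4]
  linear_combination Real.exp β ^ 2 * hs - Real.exp (-β) ^ 2 * hc + Real.exp β ^ 2 * h6 +
    Real.exp (-β) ^ 2 * (Real.exp β * Real.exp (-β) + 1) * h5

lemma eigen (β h : ℝ) (b : Bool) :
    ∑ b', tmat β h b b' * uvec β h b' = lam β h * uvec β h b := by
  have hch := char_eq β h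
  cases b <;>
    simp only [Fintype.sum_bool, tmat, uvec, spin, if_true, if_false, Bool.cond_true] <;>
    norm_num
  · -- b = false
    rw [show (-β + -h : ℝ) = -β - h by ring, show (β + -h : ℝ) = β - h by ring]
    linear_combination -hch
  · -- b = true
    ring

lemma W_bound (β h c C : ℝ)
    (hl : ∀ b, c * uvec β h b ≤ W β h 0 b) (hu : ∀ b, W β h 0 b ≤ C * uvec β h b) :
    ∀ n b, c * lam β h ^ n * uvec β h b ≤ W β h n b ∧
      W β h n b ≤ C * lam β h ^ n * uvec β h b := by
  intro n
  induction n with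
  | zero => intro b; simpa using ⟨hl b, hu b⟩
  | succ n ih =>
    intro b
    have hrec : W β h (n+1) b = ∑ b', tmat β h b b' * W β h n b' := rfl
    have htm : ∀ b' : Bool, 0 ≤ tmat β h b b' := fun b' => (Real.exp_pos _).le
    constructor
    · rw [hrec]
      calc c * lam β h ^ (n+1) * uvec β h b
          = c * lam β h ^ n * (lam β h * uvec β h b) := by ring
        _ = c * lam β h ^ n * ∑ b', tmat β h b b' * uvec β h b' := by rw [eigen]
        _ = ∑ b', tmat β h b b' * (c * lam β h ^ n * uvec β h b') := by
            rw [Finset.mul_sum]; exact Finset.sum_congr rfl fun b' _ => by ring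
        _ ≤ ∑ b', tmat β h b b' * W β h n b' :=
            Finset.sum_le_sum fun b' _ =>
              mul_le_mul_of_nonneg_left (ih b').1 (htm b')
    · rw [hrec]
      calc ∑ b', tmat β h b b' * W β h n b'
          ≤ ∑ b', tmat β h b b' * (C * lam β h ^ n * uvec β h b') :=
            Finset.sum_le_sum fun b' _ =>
              mul_le_mul_of_nonneg_left (ih b').2 (htm b')
        _ = C * lam β h ^ n * ∑ b', tmat β h b b' * uvec β h b' := by
            rw [Finset.mul_sum]; exact Finset.sum_congr rfl fun b' _ => by ring
        _ = C * lam β h ^ (n+1) * uvec β h b := by rw [eigen]; ring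

lemma aux_tendsto (K L : ℝ) :
    Tendsto (fun n : ℕ => (1 / ((n : ℝ) + 1)) * (K + n * L)) atTop (nhds L) := by
  have heq : (fun n : ℕ => (1 / ((n : ℝ) + 1)) * (K + n * L))
      = fun n : ℕ => L + (K - L) * (1 / ((n : ℝ) + 1)) := by
    funext n
    have hn : ((n : ℝ) + 1) ≠ 0 := by positivity
    field_simp
    ring
  rw [heq]
  have := (tendsto_one_div_add_atTop_nhds_zero_nat).const_mul (K - L)
  simpa using tendsto_const_nhds.add this

/-- For the Chain graph, the free entropy density converges:
`lim_{n→∞} (1/n) log Z_n(β,h) = β + log(cosh h + √(sinh² h + e^{-4β}))`. -/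
theorem chain_free_entropy_density (β h : ℝ) (hβ : 0 < β) :
    Tendsto (fun n : ℕ => (1 / (n : ℝ)) * Real.log (chainZ β h n)) atTop
      (nhds (β + Real.log (Real.cosh h +
        Real.sqrt (Real.sinh h ^ 2 + Real.exp (-(4 * β)))))) := by
  have hpos : (0:ℝ) < Real.cosh h + Real.sqrt (Real.sinh h ^ 2 + Real.exp (-(4 * β))) := by
    have := Real.cosh_pos h
    have := Real.sqrt_nonneg (Real.sinh h ^ 2 + Real.exp (-(4 * β)))
    linarith
  have hval : β + Real.log (Real.cosh h +
      Real.sqrt (Real.sinh h ^ 2 + Real.exp (-(4 * β)))) = Real.log (lam β h) := by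
    rw [lam, Real.log_mul (Real.exp_ne_zero β) (ne_of_gt hpos), Real.log_exp]
  rw [hval]
  set L := Real.log (lam β h) with hL
  rw [← tendsto_add_atTop_iff_nat 1]
  -- constants
  set c : ℝ := min (Real.exp (h * spin true) / uvec β h true)
      (Real.exp (h * spin false) / uvec β h false) with hc
  set C : ℝ := max (Real.exp (h * spin true) / uvec β h true)
      (Real.exp (h * spin false) / uvec β h false) with hC
  have hcpos : 0 < c := lt_min (div_pos (Real.exp_pos _) (uvec_pos β h true))
    (div_pos (Real.exp_pos _) (uvec_pos β h false))
  have hCpos : 0 < C := lt_of_lt_of_le hcpos (min_le_max)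
  have hl : ∀ b, c * uvec β h b ≤ W β h 0 b := by
    intro b
    have hub := uvec_pos β h b
    have : c ≤ Real.exp (h * spin b) / uvec β h b := by
      cases b
      · exact min_le_right _ _
      · exact min_le_left _ _
    calc c * uvec β h b ≤ (Real.exp (h * spin b) / uvec β h b) * uvec β h b :=
          mul_le_mul_of_nonneg_right this hub.le
      _ = W β h 0 b := by rw [div_mul_cancel₀ _ (ne_of_gt hub)]; rfl
  have hu : ∀ b, W β h 0 b ≤ C * uvec β h b := by
    intro b
    have hub := uvec_pos β h b
    have : Real.exp (h * spin b) / uvec β h b ≤ C := by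
      cases b
      · exact le_max_right _ _
      · exact le_max_left _ _
    calc W β h 0 b = (Real.exp (h * spin b) / uvec β h b) * uvec β h b := by
          rw [div_mul_cancel₀ _ (ne_of_gt hub)]; rfl
      _ ≤ C * uvec β h b := mul_le_mul_of_nonneg_right this hub.le
  have hWb := W_bound β h c C hl hu
  set U : ℝ := uvec β h true + uvec β h false with hUdef
  have hU : 0 < U := add_pos (uvec_pos β h true) (uvec_pos β h false)
  have hZeq : ∀ n, chainZ β h (n+1) = W β h n true + W β h n false := by
    intro n; rw [chainZ_succ]; exact Fintype.sum_bool _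
  have hlow : ∀ n : ℕ, c * lam β h ^ n * U ≤ chainZ β h (n+1) := by
    intro n
    rw [hZeq, hUdef]
    have h1 := (hWb n true).1
    have h2 := (hWb n false).1
    nlinarith
  have hhigh : ∀ n : ℕ, chainZ β h (n+1) ≤ C * lam β h ^ n * U := by
    intro n
    rw [hZeq, hUdef]
    have h1 := (hWb n true).2
    have h2 := (hWb n false).2
    nlinarith
  have hlampos := lam_pos β h
  have hZpos : ∀ n : ℕ, 0 < chainZ β h (n+1) := by
    intro n
    have : 0 < c * lam β h ^ n * U := mul_pos (mul_pos hcpos (pow_pos hlampos n)) hU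
    exact lt_of_lt_of_le this (hlow n)
  have hloglow : ∀ n : ℕ, (Real.log c + Real.log U) + n * L ≤ Real.log (chainZ β h (n+1)) := by
    intro n
    have hb : (0:ℝ) < c * lam β h ^ n * U := mul_pos (mul_pos hcpos (pow_pos hlampos n)) hU
    have hle := Real.log_le_log hb (hlow n)
    rw [Real.log_mul (ne_of_gt (mul_pos hcpos (pow_pos hlampos n))) (ne_of_gt hU),
      Real.log_mul (ne_of_gt hcpos) (ne_of_gt (pow_pos hlampos n)), Real.log_pow] at hle
    rw [hL]
    push_cast at hle ⊢
    linarith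
  have hloghigh : ∀ n : ℕ, Real.log (chainZ β h (n+1)) ≤ (Real.log C + Real.log U) + n * L := by
    intro n
    have hle := Real.log_le_log (hZpos n) (hhigh n)
    rw [Real.log_mul (ne_of_gt (mul_pos hCpos (pow_pos hlampos n))) (ne_of_gt hU),
      Real.log_mul (ne_of_gt hCpos) (ne_of_gt (pow_pos hlampos n)), Real.log_pow] at hle
    rw [hL]
    push_cast at hle ⊢
    linarith
  refine tendsto_of_tendsto_of_tendsto_of_le_of_le
    (aux_tendsto (Real.log c + Real.log U) L) (aux_tendsto (Real.log C + Real.log U) L) ?_ ?_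
  · intro n
    have hcast : (((n+1 : ℕ)) : ℝ) = (n:ℝ) + 1 := by push_cast; ring
    simp only [hcast]
    have hfac : (0:ℝ) ≤ 1 / ((n:ℝ) + 1) := by positivity
    exact mul_le_mul_of_nonneg_left (hloglow n) hfac
  · intro n
    have hcast : (((n+1 : ℕ)) : ℝ) = (n:ℝ) + 1 := by push_cast; ring
    simp only [hcast]
    have hfac : (0:ℝ) ≤ 1 / ((n:ℝ) + 1) := by positivity
    exact mul_le_mul_of_nonneg_left (hloghigh n) hfac
end

section
/- For the Ring graph on n vertices, the free entropy density converges: lim_{n→∞} (1/n) log Z_n(β,h) = β + log( cosh(h) + √( sinh²(h) + e^{−4β} ) ), where Z_n(β,h) = ∑_{x ∈ {−1,1}^n} exp( β ( ∑_{i=1}^{n−1} x_i x_{i+1} + x_n x_1 ) + h ∑_{i=1}^n x_i ). -/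
open Filter Real

/-- Partition function of the Ising model on the Ring (cycle) graph on `n` vertices:
`Z_n(β,h) = ∑_{x ∈ {-1,1}^n} exp(β (∑_{i=1}^{n-1} x_i x_{i+1} + x_n x_1) + h ∑_{i=1}^n x_i)`,
written with cyclic successor indices. -/
noncomputable def ringZ (β h : ℝ) (n : ℕ) : ℝ :=
  ∑ σ : Fin n → Bool,
    Real.exp (β * ∑ i : Fin n,
        spin (σ i) * spin (σ ⟨(i.1 + 1) % n, Nat.mod_lt _ i.pos⟩)
      + h * ∑ i, spin (σ i))

noncomputable def Tm (β h : ℝ) : Matrix Bool Bool ℝ :=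
  Matrix.of fun a b => Real.exp (β * (spin a * spin b) + h * spin a)

lemma walkSum (β h : ℝ) : ∀ (n : ℕ) (a b : Bool),
    ((Tm β h) ^ (n+1)) a b =
    ∑ σ : Fin n → Bool, ∏ i : Fin (n+1),
      Tm β h ((Fin.cons a (Fin.snoc σ b) : Fin (n+2) → Bool) i.castSucc)
              ((Fin.cons a (Fin.snoc σ b) : Fin (n+2) → Bool) i.succ) := by
  intro n
  induction n with
  | zero =>
    intro a b
    simp [Fin.prod_univ_succ, Fin.snoc, pow_one]
  | succ n ih =>
    intro a b
    rw [pow_succ']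
    rw [Matrix.mul_apply]
    rw [← (Fin.consEquiv (fun _ : Fin (n+1) => Bool)).sum_comp]
    rw [Fintype.sum_prod_type]
    refine Finset.sum_congr rfl fun c _ => ?_
    rw [ih c b, Finset.mul_sum]
    refine Finset.sum_congr rfl fun σ _ => ?_
    have hpath : (Fin.cons a (Fin.snoc ((Fin.consEquiv fun _ => Bool) (c, σ)) b) : Fin (n+3) → Bool)
        = Fin.cons a (Fin.cons c (Fin.snoc σ b)) := by
      simp [Fin.consEquiv, ← Fin.cons_snoc_eq_snoc_cons]
    rw [hpath]
    conv_rhs => rw [Fin.prod_univ_succ]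
    simp [← Fin.succ_castSucc]

lemma cycle_term (β h : ℝ) (n : ℕ) (τ : Fin (n+1) → Bool) :
    Real.exp (β * ∑ i : Fin (n+1), spin (τ i) * spin (τ ⟨(i.1+1)%(n+1), Nat.mod_lt _ i.pos⟩)
      + h * ∑ i, spin (τ i))
    = ∏ i : Fin (n+1), Tm β h ((Fin.snoc τ (τ 0) : Fin (n+2) → Bool) i.castSucc)
        ((Fin.snoc τ (τ 0) : Fin (n+2) → Bool) i.succ) := by
  have key2 : ∀ i : Fin (n+1), (Fin.snoc τ (τ 0) : Fin (n+2) → Bool) i.succ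
      = τ ⟨(i.1+1)%(n+1), Nat.mod_lt _ i.pos⟩ := by
    intro i
    rcases eq_or_lt_of_le (Nat.lt_succ_iff.mp i.isLt) with hi | hi
    · have hl : i = Fin.last n := Fin.ext hi
      subst hl
      have hs : (Fin.last n).succ = Fin.last (n+1) := rfl
      rw [hs, Fin.snoc_last]
      congr 1
      exact Fin.ext (by simp)
    · have hs : i.succ = Fin.castSucc ⟨i.1+1, by omega⟩ := Fin.ext rfl
      rw [hs, Fin.snoc_castSucc]
      congr 1
      exact Fin.ext (by simp [Nat.mod_eq_of_lt (by omega : i.1+1 < n+1)])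
  calc Real.exp (β * ∑ i : Fin (n+1), spin (τ i) * spin (τ ⟨(i.1+1)%(n+1), Nat.mod_lt _ i.pos⟩)
      + h * ∑ i, spin (τ i))
      = ∏ i : Fin (n+1), Real.exp (β * (spin (τ i) * spin (τ ⟨(i.1+1)%(n+1), Nat.mod_lt _ i.pos⟩))
          + h * spin (τ i)) := by
        rw [← Real.exp_sum]
        congr 1
        rw [Finset.sum_add_distrib, ← Finset.mul_sum, ← Finset.mul_sum]
    _ = _ := by
        refine Finset.prod_congr rfl fun i _ => ?_
        rw [Fin.snoc_castSucc, key2 i]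
        rfl

lemma ringZ_eq_trace (β h : ℝ) (n : ℕ) :
    ringZ β h (n+1) = Matrix.trace ((Tm β h) ^ (n+1)) := by
  unfold ringZ
  rw [Matrix.trace]
  simp only [Matrix.diag]
  simp_rw [walkSum β h n]
  rw [← (Fin.consEquiv (fun _ : Fin (n+1) => Bool)).sum_comp, Fintype.sum_prod_type]
  refine Finset.sum_congr rfl fun a _ => Finset.sum_congr rfl fun σ _ => ?_
  rw [cycle_term β h n]
  have hpath : (Fin.snoc ((Fin.consEquiv fun _ : Fin (n+1) => Bool) (a, σ))
      (((Fin.consEquiv fun _ : Fin (n+1) => Bool) (a, σ)) 0) : Fin (n+2) → Bool)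
      = Fin.cons a (Fin.snoc σ a) := by
    simp [Fin.consEquiv, Fin.cons_snoc_eq_snoc_cons]
  rw [hpath]


noncomputable def lamP (β h : ℝ) : ℝ :=
  Real.exp β * (Real.cosh h + Real.sqrt (Real.sinh h ^ 2 + Real.exp (-(4 * β))))

noncomputable def lamM (β h : ℝ) : ℝ :=
  Real.exp β * (Real.cosh h - Real.sqrt (Real.sinh h ^ 2 + Real.exp (-(4 * β))))

lemma sqrt_sq' (β h : ℝ) :
    Real.sqrt (Real.sinh h ^ 2 + Real.exp (-(4 * β))) ^ 2
      = Real.sinh h ^ 2 + Real.exp (-(4 * β)) :=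
  Real.sq_sqrt (by positivity)

lemma lam_add (β h : ℝ) :
    lamP β h + lamM β h = Real.exp β * Real.exp h + Real.exp β * (Real.exp h)⁻¹ := by
  unfold lamP lamM
  rw [Real.cosh_eq, Real.exp_neg]
  ring

lemma lam_mul (β h : ℝ) :
    lamP β h * lamM β h = (Real.exp β)^2 - ((Real.exp β)^2)⁻¹ := by
  unfold lamP lamM
  have : Real.exp β * (Real.cosh h + Real.sqrt (Real.sinh h ^ 2 + Real.exp (-(4*β)))) *
      (Real.exp β * (Real.cosh h - Real.sqrt (Real.sinh h ^ 2 + Real.exp (-(4*β)))))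
      = (Real.exp β)^2 * (Real.cosh h ^ 2 - Real.sqrt (Real.sinh h ^ 2 + Real.exp (-(4*β))) ^ 2) := by
    ring
  rw [this, sqrt_sq', Real.cosh_sq]
  have e2 : (Real.exp β)^2 = Real.exp (2*β) := by
    rw [← Real.exp_nat_mul]; norm_num
  have h4 : Real.exp (-(4*β)) = (Real.exp (2*β) * Real.exp (2*β))⁻¹ := by
    rw [← Real.exp_add, ← Real.exp_neg]
    congr 1; ring
  rw [e2, h4]
  have hE : Real.exp (2*β) ≠ 0 := Real.exp_ne_zero _
  field_simp
  ring

lemma entry_tt (β h : ℝ) : Tm β h true true = Real.exp β * Real.exp h := by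
  rw [← Real.exp_add]; simp [Tm, spin]

lemma entry_tf (β h : ℝ) : Tm β h true false = (Real.exp β)⁻¹ * Real.exp h := by
  rw [← Real.exp_neg, ← Real.exp_add]; simp [Tm, spin]

lemma entry_ft (β h : ℝ) : Tm β h false true = (Real.exp β)⁻¹ * (Real.exp h)⁻¹ := by
  rw [← Real.exp_neg, ← Real.exp_neg, ← Real.exp_add]; simp [Tm, spin]

lemma entry_ff (β h : ℝ) : Tm β h false false = Real.exp β * (Real.exp h)⁻¹ := by
  rw [← Real.exp_neg, ← Real.exp_add]; simp [Tm, spin]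

lemma cayley (β h : ℝ) :
    (Tm β h)^2 = (Real.exp β * Real.exp h + Real.exp β * (Real.exp h)⁻¹) • Tm β h
      - ((Real.exp β)^2 - ((Real.exp β)^2)⁻¹) • (1 : Matrix Bool Bool ℝ) := by
  have hE : Real.exp β ≠ 0 := Real.exp_ne_zero β
  have hH : Real.exp h ≠ 0 := Real.exp_ne_zero h
  ext a b
  rw [pow_two, Matrix.mul_apply]
  rw [Fintype.sum_bool]
  cases a <;> cases b <;>
    simp [entry_tt, entry_tf, entry_ft, entry_ff, Matrix.one_apply, Matrix.sub_apply,
      Matrix.smul_apply, smul_eq_mul] <;> field_simp <;> ring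

lemma trace_rec (β h : ℝ) (n : ℕ) :
    Matrix.trace ((Tm β h)^(n+2))
      = (Real.exp β * Real.exp h + Real.exp β * (Real.exp h)⁻¹) * Matrix.trace ((Tm β h)^(n+1))
        - ((Real.exp β)^2 - ((Real.exp β)^2)⁻¹) * Matrix.trace ((Tm β h)^n) := by
  have : (Tm β h)^(n+2) = (Tm β h)^n * (Tm β h)^2 := by rw [← pow_add]
  rw [this, cayley, Matrix.mul_sub, Matrix.mul_smul, Matrix.mul_smul, Matrix.mul_one,
    Matrix.trace_sub, Matrix.trace_smul, Matrix.trace_smul, smul_eq_mul, smul_eq_mul,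
    ← pow_succ]

lemma trace_eq_lam (β h : ℝ) (n : ℕ) :
    Matrix.trace ((Tm β h)^n) = lamP β h ^ n + lamM β h ^ n := by
  induction n using Nat.twoStepInduction with
  | zero => simp [Matrix.trace_one]; norm_num
  | one =>
    rw [pow_one, pow_one, pow_one, Matrix.trace, Fintype.sum_bool]
    simp only [Matrix.diag, entry_tt, entry_ff]
    exact (lam_add β h).symm
  | more n ih1 ih2 =>
    rw [trace_rec, ih1, ih2, ← lam_add, ← lam_mul]
    ring

lemma ringZ_eq_lam (β h : ℝ) (n : ℕ) :
    ringZ β h (n+1) = lamP β h ^ (n+1) + lamM β h ^ (n+1) := by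
  rw [ringZ_eq_trace, trace_eq_lam]

lemma sqrt_lt_cosh (β h : ℝ) (hβ : 0 < β) :
    Real.sqrt (Real.sinh h ^ 2 + Real.exp (-(4*β))) < Real.cosh h := by
  have h2 : Real.sinh h ^ 2 + Real.exp (-(4*β)) < Real.cosh h ^ 2 := by
    rw [Real.cosh_sq]
    have : Real.exp (-(4*β)) < 1 := by
      rw [Real.exp_lt_one_iff]; linarith
    linarith
  calc Real.sqrt (Real.sinh h ^ 2 + Real.exp (-(4*β)))
      < Real.sqrt (Real.cosh h ^ 2) := Real.sqrt_lt_sqrt (by positivity) h2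
    _ = Real.cosh h := Real.sqrt_sq (Real.cosh_pos h).le

lemma lamM_pos (β h : ℝ) (hβ : 0 < β) : 0 < lamM β h := by
  have := sqrt_lt_cosh β h hβ
  have he : (0:ℝ) < Real.exp β := Real.exp_pos β
  unfold lamM
  nlinarith

lemma lamM_le_lamP (β h : ℝ) : lamM β h ≤ lamP β h := by
  have hs : 0 ≤ Real.sqrt (Real.sinh h ^ 2 + Real.exp (-(4*β))) := Real.sqrt_nonneg _
  have he : (0:ℝ) < Real.exp β := Real.exp_pos β
  unfold lamM lamP
  nlinarith

lemma log_lamP (β h : ℝ) (hβ : 0 < β) :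
    Real.log (lamP β h) = β + Real.log (Real.cosh h +
      Real.sqrt (Real.sinh h ^ 2 + Real.exp (-(4 * β)))) := by
  have hpos : 0 < Real.cosh h + Real.sqrt (Real.sinh h ^ 2 + Real.exp (-(4*β))) := by
    have := Real.cosh_pos h
    have := Real.sqrt_nonneg (Real.sinh h ^ 2 + Real.exp (-(4*β)))
    linarith
  unfold lamP
  rw [Real.log_mul (Real.exp_ne_zero β) (ne_of_gt hpos), Real.log_exp]


/-- For the Ring graph, the free entropy density converges:
`lim_{n→∞} (1/n) log Z_n(β,h) = β + log(cosh h + √(sinh² h + e^{-4β}))`. -/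
theorem ring_free_entropy_density (β h : ℝ) (hβ : 0 < β) :
    Tendsto (fun n : ℕ => (1 / (n : ℝ)) * Real.log (ringZ β h n)) atTop
      (nhds (β + Real.log (Real.cosh h +
        Real.sqrt (Real.sinh h ^ 2 + Real.exp (-(4 * β)))))) := by
  rw [← log_lamP β h hβ]
  have hm : 0 < lamM β h := lamM_pos β h hβ
  have hle : lamM β h ≤ lamP β h := lamM_le_lamP β h
  have hp : 0 < lamP β h := lt_of_lt_of_le hm hle
  have key : ∀ n : ℕ, 1 ≤ n →
      Real.log (lamP β h) ≤ (1/(n:ℝ)) * Real.log (ringZ β h n)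
      ∧ (1/(n:ℝ)) * Real.log (ringZ β h n) ≤ Real.log (lamP β h) + Real.log 2 / n := by
    intro n hn
    obtain ⟨m, rfl⟩ := Nat.exists_eq_add_of_le hn
    set n := 1 + m with hn'
    have hZ : ringZ β h n = lamP β h ^ n + lamM β h ^ n := by
      rw [hn', add_comm 1 m]; exact ringZ_eq_lam β h m
    have hnp : (0:ℝ) < n := by positivity
    have hPp : 0 < lamP β h ^ n := pow_pos hp n
    have h1 : lamP β h ^ n ≤ ringZ β h n := by
      rw [hZ]; nlinarith [pow_pos hm n]
    have h2 : ringZ β h n ≤ 2 * lamP β h ^ n := by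
      rw [hZ]
      have := pow_le_pow_left₀ hm.le hle n
      linarith
    have hlog1 : (n:ℝ) * Real.log (lamP β h) ≤ Real.log (ringZ β h n) := by
      rw [← Real.log_pow]
      exact Real.log_le_log hPp h1
    have hlog2 : Real.log (ringZ β h n) ≤ Real.log 2 + (n:ℝ) * Real.log (lamP β h) := by
      have := Real.log_le_log (lt_of_lt_of_le hPp h1) h2
      rwa [Real.log_mul (by norm_num) (ne_of_gt hPp), Real.log_pow] at this
    constructor
    · have := mul_le_mul_of_nonneg_left hlog1 (le_of_lt (one_div_pos.mpr hnp))
      calc Real.log (lamP β h) = (1/(n:ℝ)) * ((n:ℝ) * Real.log (lamP β h)) := by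
            field_simp
        _ ≤ _ := this
    · have := mul_le_mul_of_nonneg_left hlog2 (le_of_lt (one_div_pos.mpr hnp))
      calc (1/(n:ℝ)) * Real.log (ringZ β h n)
          ≤ (1/(n:ℝ)) * (Real.log 2 + (n:ℝ) * Real.log (lamP β h)) := this
        _ = Real.log (lamP β h) + Real.log 2 / n := by field_simp; ring
  refine tendsto_of_tendsto_of_tendsto_of_le_of_le' (g := fun _ : ℕ => Real.log (lamP β h))
    (h := fun n : ℕ => Real.log (lamP β h) + Real.log 2 / n) tendsto_const_nhds ?_ ?_ ?_
  · have := (tendsto_const_div_atTop_nhds_zero_nat (Real.log 2)).const_add (Real.log (lamP β h))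
    simpa using this
  · filter_upwards [eventually_ge_atTop 1] with n hn
    exact (key n hn).1
  · filter_upwards [eventually_ge_atTop 1] with n hn
    exact (key n hn).2
end

section
/- For the Star graph on n vertices, the free entropy density converges: lim_{n→∞} (1/n) log Z_n(β,h) = log( 2 cosh( β + |h| ) ), where Z_n(β,h) = ∑_{x ∈ {−1,1}^n} exp( β ∑_{i=2}^{n} x_1 x_i + h ∑_{i=1}^n x_i ). -/
open Filter Real

/-- Partition function of the Ising model on the Star graph on `n` vertices with center
vertex `0`: `Z_n(β,h) = ∑_{x ∈ {-1,1}^n} exp(β ∑_{i=2}^n x_1 x_i + h ∑_{i=1}^n x_i)`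
(here written `0`-indexed, the center being vertex `0`). -/
noncomputable def starZ (β h : ℝ) (n : ℕ) : ℝ :=
  ∑ σ : Fin n → Bool,
    Real.exp (β * ∑ i : Fin n,
        (if 0 < i.1 then spin (σ ⟨0, i.pos⟩) * spin (σ i) else 0)
      + h * ∑ i, spin (σ i))

lemma sum_prod_bool (m : ℕ) (g : Bool → ℝ) :
    ∑ τ : Fin m → Bool, ∏ i, g (τ i) = (∑ b, g b) ^ m := by
  have h1 : (∑ b, g b) ^ m = ∏ _i : Fin m, (∑ b, g b) := by
    simp [Finset.prod_const]
  rw [h1, Finset.prod_univ_sum (fun _ => Finset.univ) (fun _ b => g b),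
    Fintype.piFinset_univ]

lemma two_cosh (t : ℝ) : Real.exp t + Real.exp (-t) = 2 * Real.cosh t := by
  rw [Real.cosh_eq]; ring

lemma starZ_succ (β h : ℝ) (m : ℕ) :
    starZ β h (m + 1) =
      Real.exp h * (2 * Real.cosh (β + h)) ^ m
        + Real.exp (-h) * (2 * Real.cosh (β - h)) ^ m := by
  unfold starZ
  rw [← (Fin.consEquiv (fun _ : Fin (m+1) => Bool)).sum_comp]
  rw [Fintype.sum_prod_type]
  have key : ∀ b : Bool, ∀ τ : Fin m → Bool,
      (β * ∑ i : Fin (m+1),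
          (if 0 < i.1 then spin ((Fin.cons b τ : Fin (m+1) → Bool) ⟨0, i.pos⟩)
            * spin ((Fin.cons b τ : Fin (m+1) → Bool) i) else 0)
        + h * ∑ i, spin ((Fin.cons b τ : Fin (m+1) → Bool) i))
      = h * spin b + ∑ i : Fin m, (β * spin b + h) * spin (τ i) := by
    intro b τ
    rw [Fin.sum_univ_succ, Fin.sum_univ_succ]
    simp only [Fin.val_zero, Nat.lt_irrefl, if_false, Fin.cons_zero, Fin.cons_succ,
      Fin.val_succ, Nat.succ_pos, if_true, Fin.mk_zero, zero_add]
    have : ∑ i : Fin m, (β * spin b + h) * spin (τ i)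
        = ∑ x : Fin m, (β * (spin b * spin (τ x)) + h * spin (τ x)) := by
      apply Finset.sum_congr rfl; intros; ring
    rw [this, Finset.sum_add_distrib]
    simp only [← Finset.mul_sum, ← mul_assoc]
    ring
  have inner : ∀ b : Bool,
      (∑ τ : Fin m → Bool,
        Real.exp (h * spin b + ∑ i : Fin m, (β * spin b + h) * spin (τ i)))
      = Real.exp (h * spin b) * (2 * Real.cosh (β * spin b + h)) ^ m := by
    intro b
    have e1 : ∀ τ : Fin m → Bool,
        Real.exp (h * spin b + ∑ i : Fin m, (β * spin b + h) * spin (τ i))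
        = Real.exp (h * spin b) * ∏ i, Real.exp ((β * spin b + h) * spin (τ i)) := by
      intro τ; rw [Real.exp_add, Real.exp_sum]
    simp only [e1]
    rw [← Finset.mul_sum, sum_prod_bool m (fun b' => Real.exp ((β * spin b + h) * spin b'))]
    congr 2
    have e2 : ∑ b' : Bool, Real.exp ((β * spin b + h) * spin b')
        = Real.exp (β * spin b + h) + Real.exp (-(β * spin b + h)) := by
      rw [Fintype.sum_bool]
      norm_num [spin]
    rw [e2, two_cosh]
  have step : ∀ b : Bool, ∀ τ : Fin m → Bool,
      Real.exp (β * ∑ i : Fin (m+1),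
          (if 0 < i.1 then spin ((Fin.consEquiv (fun _ : Fin (m+1) => Bool)) (b, τ) ⟨0, i.pos⟩)
            * spin ((Fin.consEquiv (fun _ : Fin (m+1) => Bool)) (b, τ) i) else 0)
        + h * ∑ i, spin ((Fin.consEquiv (fun _ : Fin (m+1) => Bool)) (b, τ) i))
      = Real.exp (h * spin b + ∑ i : Fin m, (β * spin b + h) * spin (τ i)) := by
    intro b τ
    exact congrArg Real.exp (key b τ)
  calc (∑ b : Bool, ∑ τ : Fin m → Bool,
        Real.exp (β * ∑ i : Fin (m+1),
          (if 0 < i.1 then spin ((Fin.consEquiv (fun _ : Fin (m+1) => Bool)) (b, τ) ⟨0, i.pos⟩)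
            * spin ((Fin.consEquiv (fun _ : Fin (m+1) => Bool)) (b, τ) i) else 0)
        + h * ∑ i, spin ((Fin.consEquiv (fun _ : Fin (m+1) => Bool)) (b, τ) i)))
      = ∑ b : Bool, Real.exp (h * spin b) * (2 * Real.cosh (β * spin b + h)) ^ m := by
        apply Finset.sum_congr rfl
        intro b _
        rw [Finset.sum_congr rfl (fun τ _ => step b τ), inner b]
    _ = Real.exp h * (2 * Real.cosh (β + h)) ^ m
        + Real.exp (-h) * (2 * Real.cosh (β - h)) ^ m := by
        rw [Fintype.sum_bool]
        simp only [spin, if_true, if_false]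
        norm_num
        rw [show -β + h = -(β - h) by ring, Real.cosh_neg]

lemma starZ_succ_abs (β h : ℝ) (m : ℕ) :
    starZ β h (m + 1) =
      Real.exp |h| * (2 * Real.cosh (β + |h|)) ^ m
        + Real.exp (-|h|) * (2 * Real.cosh (β - |h|)) ^ m := by
  rw [starZ_succ]
  rcases abs_cases h with ⟨e, _⟩ | ⟨e, _⟩
  · rw [e]
  · rw [e, show β + -h = β - h by ring, show β - -h = β + h by ring, neg_neg]
    ring

/-- For the Star graph, the free entropy density converges:
`lim_{n→∞} (1/n) log Z_n(β,h) = log(2 cosh(β + |h|))`. -/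
theorem star_free_entropy_density (β h : ℝ) (hβ : 0 < β) :
    Tendsto (fun n : ℕ => (1 / (n : ℝ)) * Real.log (starZ β h n)) atTop
      (nhds (Real.log (2 * Real.cosh (β + |h|)))) := by
  set c : ℝ := 2 * Real.cosh (β + |h|) with hc
  set d : ℝ := 2 * Real.cosh (β - |h|) with hd
  set L : ℝ := Real.log c with hL
  have hc2 : (2:ℝ) ≤ c := by nlinarith [Real.one_le_cosh (β + |h|)]
  have hc0 : 0 < c := by linarith
  have hd0 : 0 < d := by nlinarith [Real.one_le_cosh (β - |h|)]
  have hdc : d ≤ c := by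
    have habs : |(β - |h|)| ≤ |(β + |h|)| := by
      rw [abs_of_pos (by positivity : (0:ℝ) < β + |h|)]
      rcases abs_cases (β - |h|) with ⟨e, _⟩ | ⟨e, _⟩ <;> rw [e] <;>
        linarith [abs_nonneg h]
    exact mul_le_mul_of_nonneg_left (Real.cosh_le_cosh.2 habs) (by norm_num)
  have hL2 : Real.log 2 ≤ L := Real.log_le_log (by norm_num) hc2
  have hlog2 : (0:ℝ) < Real.log 2 := Real.log_pos (by norm_num)
  have hL0 : 0 < L := lt_of_lt_of_le hlog2 hL2
  set C : ℝ := |h| + Real.log 2 + L with hC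
  have key : ∀ m : ℕ, |Real.log (starZ β h (m+1)) - ((m:ℝ)+1) * L| ≤ C := by
    intro m
    have hzeq := starZ_succ_abs β h m
    rw [← hc, ← hd] at hzeq
    have hcm : (0:ℝ) < c ^ m := pow_pos hc0 m
    have hlow : Real.exp |h| * c ^ m ≤ starZ β h (m+1) := by
      rw [hzeq]
      have : 0 ≤ Real.exp (-|h|) * d ^ m := by positivity
      linarith
    have hhigh : starZ β h (m+1) ≤ 2 * (Real.exp |h| * c ^ m) := by
      rw [hzeq]
      have h1 : Real.exp (-|h|) ≤ Real.exp |h| :=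
        Real.exp_le_exp.2 (by linarith [abs_nonneg h])
      have h2 : d ^ m ≤ c ^ m := pow_le_pow_left₀ hd0.le hdc m
      nlinarith [Real.exp_pos |h|, Real.exp_pos (-|h|), pow_pos hd0 m]
    have hZ0 : 0 < starZ β h (m+1) := lt_of_lt_of_le (by positivity) hlow
    have hlow' : |h| + (m:ℝ) * L ≤ Real.log (starZ β h (m+1)) := by
      have := Real.log_le_log (by positivity) hlow
      rwa [Real.log_mul (Real.exp_ne_zero _) (ne_of_gt hcm), Real.log_exp,
        Real.log_pow, ← hL] at this
    have hhigh' : Real.log (starZ β h (m+1)) ≤ Real.log 2 + |h| + (m:ℝ) * L := by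
      have := Real.log_le_log hZ0 hhigh
      rwa [Real.log_mul (by norm_num) (by positivity),
        Real.log_mul (Real.exp_ne_zero _) (ne_of_gt hcm), Real.log_exp,
        Real.log_pow, ← hL, ← add_assoc] at this
    rw [abs_le]
    refine ⟨?_, ?_⟩ <;>
      · have e1 : ((m:ℝ)+1) * L = (m:ℝ) * L + L := by ring
        rw [e1]
        simp only [hC]
        linarith [abs_nonneg h]
  have hbound : ∀ᶠ n : ℕ in atTop,
      ‖(1 / (n : ℝ)) * Real.log (starZ β h n) - L‖ ≤ C / n := by
    filter_upwards [eventually_ge_atTop 1] with n hn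
    obtain ⟨m, rfl⟩ : ∃ m, n = m + 1 := ⟨n - 1, by omega⟩
    have hn0 : (0:ℝ) < ((m:ℝ) + 1) := by positivity
    have e1 : (1 / ((m:ℝ)+1)) * Real.log (starZ β h (m+1)) - L
        = (1 / ((m:ℝ)+1)) * (Real.log (starZ β h (m+1)) - ((m:ℝ)+1) * L) := by
      field_simp
    push_cast
    rw [e1, norm_mul, Real.norm_eq_abs, Real.norm_eq_abs,
      abs_of_pos (by positivity : (0:ℝ) < 1/((m:ℝ)+1))]
    rw [div_eq_mul_inv C, mul_comm C, ← one_div]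
    exact mul_le_mul_of_nonneg_left (key m) (by positivity)
  have h0 : Tendsto (fun n : ℕ => (1 / (n : ℝ)) * Real.log (starZ β h n) - L) atTop (nhds 0) :=
    squeeze_zero_norm' hbound (tendsto_const_div_atTop_nhds_zero_nat C)
  have h1 := h0.add (tendsto_const_nhds (x := L) (f := atTop))
  simpa using h1
end

section
/- For the Wheel graph on n vertices, the free entropy density converges: lim_{n→∞} (1/n) log Z_n(β,h) = β + log( cosh( β + |h| ) + √( sinh²( β + |h| ) + e^{−4β} ) ), where Z_n(β,h) = ∑_{x ∈ {−1,1}^n} exp( β ( ∑_{i=2}^{n} x_1 x_i + ∑_{i=2}^{n−1} x_i x_{i+1} + x_n x_2 ) + h ∑_{i=1}^n x_i ). -/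
open Filter Real

/-- Cyclic successor on the rim `{1, …, n-1}` of the Wheel graph (`0`-indexed, with
center `0`): vertex `i` is followed by `i+1`, and vertex `n-1` wraps around to `1`. -/
def rimNext (n : ℕ) (i : Fin n) : Fin n :=
  if h : i.1 + 1 < n then ⟨i.1 + 1, h⟩ else ⟨1 % n, Nat.mod_lt _ i.pos⟩

/-- Partition function of the Ising model on the Wheel graph on `n` vertices (center
vertex `0` joined to every rim vertex, rim vertices `1, …, n-1` forming a cycle):
`Z_n(β,h) = ∑_{x ∈ {-1,1}^n} exp(β (∑_{i=2}^n x_1 x_i + ∑_{i=2}^{n-1} x_i x_{i+1} + x_n x_2)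
+ h ∑_{i=1}^n x_i)` (here written `0`-indexed). -/
noncomputable def wheelZ (β h : ℝ) (n : ℕ) : ℝ :=
  ∑ σ : Fin n → Bool,
    Real.exp (β * ((∑ i : Fin n,
        (if 0 < i.1 then spin (σ ⟨0, i.pos⟩) * spin (σ i) else 0))
      + (∑ i : Fin n,
        (if 0 < i.1 then spin (σ i) * spin (σ (rimNext n i)) else 0)))
      + h * ∑ i, spin (σ i))

namespace WheelAux

variable (M : Matrix Bool Bool ℝ)

/-- weight of the walk `a → τ 0 → ⋯ → τ (k-1) → b`. -/
def pw : (k : ℕ) → Bool → Bool → (Fin k → Bool) → ℝ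
  | 0, a, b, _ => M a b
  | (k+1), a, b, τ => M a (τ 0) * pw k (τ 0) b (fun i => τ i.succ)

lemma sum_pw : ∀ (k : ℕ) (a b : Bool), ∑ τ : Fin k → Bool, pw M k a b τ = (M ^ (k+1)) a b := by
  intro k
  induction k with
  | zero =>
    intro a b
    simp [pw]
  | succ k ih =>
    intro a b
    rw [← Equiv.sum_comp (Fin.consEquiv (fun _ : Fin (k+1) => Bool))]
    rw [Fintype.sum_prod_type]
    have : ∀ c : Bool, ∑ ρ : Fin k → Bool, pw M (k+1) a b ((Fin.consEquiv _) (c, ρ))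
        = M a c * (M ^ (k+1)) c b := by
      intro c
      have h1 : ∀ ρ : Fin k → Bool, pw M (k+1) a b ((Fin.consEquiv _) (c, ρ))
          = M a c * pw M k c b ρ := by
        intro ρ
        simp [pw, Fin.consEquiv, Fin.cons_succ]
      rw [Finset.sum_congr rfl (fun ρ _ => h1 ρ), ← Finset.mul_sum, ih c b]
    simp only [this]
    rw [show M ^ (k+1+1) = M * M ^ (k+1) from pow_succ' M (k+1), Matrix.mul_apply]

lemma pw_eq_prod : ∀ (k : ℕ) (a b : Bool) (ρ : Fin k → Bool),
    pw M k a b ρ = ∏ i : Fin (k+1),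
      M ((Fin.cons a ρ : Fin (k+1) → Bool) i) ((Fin.snoc ρ b : Fin (k+1) → Bool) i) := by
  intro k
  induction k with
  | zero =>
    intro a b ρ
    rw [Fin.prod_univ_one, Fin.cons_zero, show (0:Fin 1) = Fin.last 0 from rfl, Fin.snoc_last]
    rfl
  | succ k ih =>
    intro a b ρ
    rw [Fin.prod_univ_succ]
    simp only [Fin.cons_zero]
    have h0 : (Fin.snoc ρ b : Fin (k+2) → Bool) 0 = ρ 0 := by
      rw [show (0 : Fin (k+2)) = (Fin.castSucc 0) from rfl, Fin.snoc_castSucc]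
    rw [h0]
    show M a (ρ 0) * pw M k (ρ 0) b (fun i => ρ i.succ) = _
    rw [ih (ρ 0) b (fun i => ρ i.succ)]
    congr 1
    apply Finset.prod_congr rfl
    intro i _
    congr 1
    · rw [Fin.cons_succ]
      refine (Fin.cases ?_ ?_ i :
        ((Fin.cons (ρ 0) (fun j => ρ j.succ) : Fin (k+1) → Bool) i) = (ρ i)) <;> simp
    · refine Fin.lastCases ?_ ?_ i
      · simp [Fin.snoc_last]
      · intro j
        rw [Fin.succ_castSucc, Fin.snoc_castSucc, Fin.snoc_castSucc]

lemma cyc_prod (k : ℕ) (τ : Fin (k+1) → Bool) :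
    ∏ i : Fin (k+1), M (τ i) (τ (i+1)) = pw M k (τ 0) (τ 0) (Fin.tail τ) := by
  rw [pw_eq_prod]
  apply Finset.prod_congr rfl
  intro i _
  congr 1
  · exact congrFun (Fin.cons_self_tail τ).symm i
  · refine Fin.lastCases ?_ ?_ i
    · rw [Fin.snoc_last]
      congr 1
      ext
      simp [Fin.add_def]
    · intro j
      rw [Fin.snoc_castSucc, Fin.tail, Fin.coeSucc_eq_succ]

lemma trace_pow (k : ℕ) :
    Matrix.trace (M ^ (k+1)) = ∑ τ : Fin (k+1) → Bool, ∏ i : Fin (k+1), M (τ i) (τ (i+1)) := by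
  simp only [cyc_prod]
  rw [← Equiv.sum_comp (Fin.consEquiv (fun _ : Fin (k+1) => Bool)), Fintype.sum_prod_type]
  have : ∀ (a : Bool) (ρ : Fin k → Bool),
      (fun τ : Fin (k+1) → Bool => pw M k (τ 0) (τ 0) (Fin.tail τ))
        ((Fin.consEquiv (fun _ : Fin (k+1) => Bool)) (a, ρ)) = pw M k a a ρ := by
    intro a ρ
    have he : ((Fin.consEquiv (fun _ : Fin (k+1) => Bool)) (a, ρ) : Fin (k+1) → Bool)
        = Fin.cons a ρ := rfl
    simp only [he, Fin.cons_zero, Fin.tail_cons]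
  simp only [this]
  have : ∀ a : Bool, ∑ ρ : Fin k → Bool, pw M k a a ρ = (M ^ (k+1)) a a := fun a => sum_pw M k a a
  simp only [this]
  rw [Matrix.trace]
  simp [Matrix.diag]



lemma trace_pow_eig (M : Matrix Bool Bool ℝ) (p q : ℝ)
    (hsum : p + q = M true true + M false false)
    (hprod : p * q = M true true * M false false - M true false * M false true) :
    ∀ m : ℕ, Matrix.trace (M ^ m) = p ^ m + q ^ m := by
  set t := M true true + M false false with ht
  set d := M true true * M false false - M true false * M false true with hd
  have hCH : M ^ 2 = t • M - d • (1 : Matrix Bool Bool ℝ) := by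
    ext x y
    simp only [pow_two, Matrix.mul_apply, Fintype.sum_bool, Matrix.sub_apply, Matrix.smul_apply,
      Matrix.one_apply, smul_eq_mul]
    cases x <;> cases y <;> simp <;> ring
  have hrec : ∀ m : ℕ, Matrix.trace (M ^ (m+2)) =
      t * Matrix.trace (M ^ (m+1)) - d * Matrix.trace (M ^ m) := by
    intro m
    have : M ^ (m+2) = M ^ m * M ^ 2 := by rw [← pow_add]
    rw [this, hCH, Matrix.mul_sub, Matrix.mul_smul, Matrix.mul_smul, Matrix.mul_one,
      Matrix.trace_sub, Matrix.trace_smul, Matrix.trace_smul, smul_eq_mul, smul_eq_mul,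
      ← pow_succ]
  have hp2 : p ^ 2 = t * p - d := by rw [← hsum, ← hprod]; ring
  have hq2 : q ^ 2 = t * q - d := by rw [← hsum, ← hprod]; ring
  intro m
  induction m using Nat.twoStepInduction with
  | zero => norm_num
  | one =>
    rw [pow_one, Matrix.trace, Fintype.sum_bool]
    simp only [Matrix.diag]
    rw [pow_one, pow_one, hsum]
  | more m ih1 ih2 =>
    rw [hrec m, ih1, ih2]
    have hpr : p ^ (m+2) = t * p ^ (m+1) - d * p ^ m := by
      have : p ^ (m+2) = p ^ m * p ^ 2 := by ring
      rw [this, hp2]; ring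
    have hqr : q ^ (m+2) = q ^ m * q ^ 2 := by ring
    rw [hpr, hqr, hq2]; ring



noncomputable def T (β H : ℝ) : Matrix Bool Bool ℝ :=
  Matrix.of fun x y => Real.exp (β * (spin x * spin y) + H * spin x)

lemma rimNext_succ (m : ℕ) (j : Fin (m+1)) :
    rimNext (m+2) j.succ = (j + 1).succ := by
  unfold rimNext
  apply Fin.ext
  have hv : j.succ.1 = j.1 + 1 := rfl
  by_cases hj : j.1 + 1 < m + 1
  · rw [dif_pos (by simpa using Nat.succ_lt_succ hj)]
    simp [Fin.add_def, Nat.mod_eq_of_lt hj]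
  · have hj' : j.1 = m := by omega
    rw [dif_neg (by omega)]
    have h1 : (1 : ℕ) % (m+2) = 1 := Nat.mod_eq_of_lt (by omega)
    simp [Fin.add_def, hj']

lemma wheelZ_eq (β h : ℝ) (m : ℕ) :
    wheelZ β h (m+2) = ∑ s : Bool, Real.exp (h * spin s) *
      ∑ τ : Fin (m+1) → Bool, ∏ j : Fin (m+1),
        T β (h + β * spin s) (τ j) (τ (j + 1)) := by
  rw [wheelZ, ← Equiv.sum_comp (Fin.consEquiv (fun _ : Fin (m+2) => Bool)),
    Fintype.sum_prod_type]
  apply Finset.sum_congr rfl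
  intro s _
  rw [Finset.mul_sum]
  apply Finset.sum_congr rfl
  intro τ _
  have he : ((Fin.consEquiv (fun _ : Fin (m+2) => Bool)) (s, τ) : Fin (m+2) → Bool)
      = Fin.cons s τ := rfl
  rw [he]
  set σ : Fin (m+2) → Bool := Fin.cons s τ with hσ
  have hσ0 : ∀ (hp : (0:ℕ) < m + 2), σ ⟨0, hp⟩ = s := fun hp => by
    rw [show (⟨0, hp⟩ : Fin (m+2)) = 0 from rfl, hσ, Fin.cons_zero]
  have hA : (∑ i : Fin (m+2), (if 0 < i.1 then spin (σ ⟨0, i.pos⟩) * spin (σ i) else 0))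
      = spin s * ∑ j : Fin (m+1), spin (τ j) := by
    rw [Fin.sum_univ_succ, Finset.mul_sum]
    simp only [Fin.val_zero, lt_irrefl, if_false, zero_add]
    apply Finset.sum_congr rfl
    intro j _
    simp only [Fin.val_succ]
    rw [if_pos (Nat.succ_pos j.1), hσ0, hσ, Fin.cons_succ]
  have hB : (∑ i : Fin (m+2), (if 0 < i.1 then spin (σ i) * spin (σ (rimNext (m+2) i)) else 0))
      = ∑ j : Fin (m+1), spin (τ j) * spin (τ (j + 1)) := by
    rw [Fin.sum_univ_succ]
    simp only [Fin.val_zero, lt_irrefl, if_false, zero_add]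
    apply Finset.sum_congr rfl
    intro j _
    simp only [Fin.val_succ]
    rw [if_pos (Nat.succ_pos j.1), rimNext_succ, hσ, Fin.cons_succ, Fin.cons_succ]
  have hC : (∑ i : Fin (m+2), spin (σ i)) = spin s + ∑ j : Fin (m+1), spin (τ j) := by
    rw [Fin.sum_univ_succ, hσ]
    simp [Fin.cons_succ]
  rw [hA, hB, hC]
  rw [show β * (spin s * ∑ j : Fin (m+1), spin (τ j)
        + ∑ j : Fin (m+1), spin (τ j) * spin (τ (j + 1)))
      + h * (spin s + ∑ j : Fin (m+1), spin (τ j))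
    = h * spin s + ((β * ∑ j : Fin (m+1), spin (τ j) * spin (τ (j + 1)))
        + (h + β * spin s) * ∑ j : Fin (m+1), spin (τ j)) by ring]
  rw [Real.exp_add]
  congr 1
  rw [Finset.mul_sum, Finset.mul_sum, ← Finset.sum_add_distrib, Real.exp_sum]
  apply Finset.prod_congr rfl
  intro j _
  rw [T]
  simp only [Matrix.of_apply]



/-- top/bottom transfer eigenvalues -/
noncomputable def lamP (β H : ℝ) : ℝ :=
  Real.exp β * (Real.cosh H + Real.sqrt (Real.sinh H ^ 2 + Real.exp (-(4 * β))))
noncomputable def lamM (β H : ℝ) : ℝ :=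
  Real.exp β * (Real.cosh H - Real.sqrt (Real.sinh H ^ 2 + Real.exp (-(4 * β))))

lemma arg_nonneg (β H : ℝ) : 0 ≤ Real.sinh H ^ 2 + Real.exp (-(4 * β)) := by positivity

lemma lam_sum (β H : ℝ) : lamP β H + lamM β H = T β H true true + T β H false false := by
  have hst : spin true = 1 := rfl
  have hsf : spin false = -1 := rfl
  simp only [T, Matrix.of_apply, hst, hsf, lamP, lamM]
  rw [show β * (1 * 1) + H * 1 = β + H by ring, show β * (-1 * -1) + H * -1 = β + -H by ring,
    Real.exp_add, Real.exp_add, Real.cosh_eq]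
  ring

lemma lam_prod (β H : ℝ) : lamP β H * lamM β H =
    T β H true true * T β H false false - T β H true false * T β H false true := by
  have hst : spin true = 1 := rfl
  have hsf : spin false = -1 := rfl
  simp only [T, Matrix.of_apply, hst, hsf, lamP, lamM]
  rw [show β * (1 * 1) + H * 1 = β + H by ring, show β * (-1 * -1) + H * -1 = β + -H by ring,
    show β * (1 * -1) + H * 1 = -β + H by ring, show β * (-1 * 1) + H * -1 = -β + -H by ring]
  have h1 : Real.exp (β + H) * Real.exp (β + -H) = Real.exp β ^ 2 := by
    rw [← Real.exp_add, sq, ← Real.exp_add]; ring_nf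
  have h2 : Real.exp (-β + H) * Real.exp (-β + -H) = Real.exp β ^ 2 * Real.exp (-(4*β)) := by
    rw [← Real.exp_add, sq, ← Real.exp_add, ← Real.exp_add]; congr 1; ring
  have h3 : Real.sqrt (Real.sinh H ^ 2 + Real.exp (-(4 * β))) ^ 2
      = Real.sinh H ^ 2 + Real.exp (-(4 * β)) := Real.sq_sqrt (arg_nonneg β H)
  have h4 : Real.cosh H ^ 2 - Real.sinh H ^ 2 = 1 := Real.cosh_sq_sub_sinh_sq H
  linear_combination -h1 + h2 - Real.exp β ^ 2 * h3 + Real.exp β ^ 2 * h4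

lemma lamM_pos (β H : ℝ) (hβ : 0 < β) : 0 < lamM β H := by
  rw [lamM]
  apply mul_pos (Real.exp_pos β)
  rw [sub_pos]
  have h1 : Real.sinh H ^ 2 + Real.exp (-(4 * β)) < Real.cosh H ^ 2 := by
    have := Real.cosh_sq_sub_sinh_sq H
    have : Real.exp (-(4*β)) < 1 := by
      rw [Real.exp_lt_one_iff]; linarith
    nlinarith [Real.cosh_sq_sub_sinh_sq H]
  calc Real.sqrt (Real.sinh H ^ 2 + Real.exp (-(4 * β)))
      < Real.sqrt (Real.cosh H ^ 2) := Real.sqrt_lt_sqrt (arg_nonneg β H) h1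
    _ = Real.cosh H := by rw [Real.sqrt_sq (Real.cosh_pos H).le]

lemma lamM_le_lamP (β H : ℝ) : lamM β H ≤ lamP β H := by
  rw [lamM, lamP]
  apply mul_le_mul_of_nonneg_left _ (Real.exp_pos β).le
  have := Real.sqrt_nonneg (Real.sinh H ^ 2 + Real.exp (-(4 * β)))
  linarith

lemma lamP_pos (β H : ℝ) (hβ : 0 < β) : 0 < lamP β H :=
  lt_of_lt_of_le (lamM_pos β H hβ) (lamM_le_lamP β H)

lemma lamP_even (β H : ℝ) : lamP β (-H) = lamP β H := by
  rw [lamP, lamP, Real.cosh_neg, Real.sinh_neg, neg_sq]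

lemma lamP_mono (β : ℝ) {H K : ℝ} (hHK : |H| ≤ K) : lamP β H ≤ lamP β K := by
  have hK : 0 ≤ K := le_trans (abs_nonneg H) hHK
  rw [lamP, lamP]
  apply mul_le_mul_of_nonneg_left _ (Real.exp_pos β).le
  have hc : Real.cosh H ≤ Real.cosh K := by
    rw [Real.cosh_le_cosh]
    rwa [abs_of_nonneg hK]
  have hs : Real.sinh H ^ 2 ≤ Real.sinh K ^ 2 := by
    have h1 : |Real.sinh H| = Real.sinh |H| := Real.abs_sinh H
    have h2 : Real.sinh |H| ≤ Real.sinh K := Real.sinh_le_sinh.2 hHK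
    have h3 : 0 ≤ Real.sinh |H| := by
      have := Real.sinh_le_sinh.2 (abs_nonneg H)
      rwa [Real.sinh_zero] at this
    calc Real.sinh H ^ 2 = |Real.sinh H| ^ 2 := (sq_abs _).symm
      _ ≤ Real.sinh K ^ 2 := by rw [h1]; exact pow_le_pow_left₀ h3 h2 2
  have := Real.sqrt_le_sqrt (show Real.sinh H ^ 2 + Real.exp (-(4*β)) ≤ Real.sinh K ^ 2 + Real.exp (-(4*β)) by linarith)
  linarith


lemma traceT (β H : ℝ) (m : ℕ) :
    Matrix.trace ((T β H) ^ m) = lamP β H ^ m + lamM β H ^ m :=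
  trace_pow_eig (T β H) (lamP β H) (lamM β H) (lam_sum β H) (lam_prod β H) m

lemma wheelZ_closed (β h : ℝ) (m : ℕ) :
    wheelZ β h (m+2) = ∑ s : Bool, Real.exp (h * spin s) *
      (lamP β (h + β * spin s) ^ (m+1) + lamM β (h + β * spin s) ^ (m+1)) := by
  rw [wheelZ_eq]
  apply Finset.sum_congr rfl
  intro s _
  rw [← trace_pow (T β (h + β * spin s)) m, traceT]

lemma abs_field_le (β h : ℝ) (hβ : 0 < β) (s : Bool) : |h + β * spin s| ≤ β + |h| := by
  cases s
  · rw [show spin false = (-1:ℝ) from rfl, mul_neg_one]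
    calc |h + -β| = |h - β| := by ring_nf
      _ ≤ |h| + |β| := abs_sub h β
      _ = β + |h| := by rw [abs_of_pos hβ]; ring
  · rw [show spin true = (1:ℝ) from rfl, mul_one]
    calc |h + β| ≤ |h| + |β| := abs_add_le h β
      _ = β + |h| := by rw [abs_of_pos hβ]; ring

lemma wheelZ_upper (β h : ℝ) (hβ : 0 < β) (m : ℕ) :
    wheelZ β h (m+2) ≤ 4 * Real.exp |h| * lamP β (β + |h|) ^ (m+1) := by
  rw [wheelZ_closed]
  rw [Fintype.sum_bool]
  have key : ∀ s : Bool, Real.exp (h * spin s) *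
      (lamP β (h + β * spin s) ^ (m+1) + lamM β (h + β * spin s) ^ (m+1))
      ≤ 2 * Real.exp |h| * lamP β (β + |h|) ^ (m+1) := by
    intro s
    have h1 : Real.exp (h * spin s) ≤ Real.exp |h| := by
      apply Real.exp_le_exp.2
      calc h * spin s ≤ |h * spin s| := le_abs_self _
        _ = |h| := by cases s <;> simp [spin, abs_of_nonpos, abs_neg]
    have hle : lamP β (h + β * spin s) ≤ lamP β (β + |h|) := lamP_mono β (abs_field_le β h hβ s)
    have h2 : lamP β (h + β * spin s) ^ (m+1) ≤ lamP β (β + |h|) ^ (m+1) :=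
      pow_le_pow_left₀ (lamP_pos β _ hβ).le hle (m+1)
    have h3 : lamM β (h + β * spin s) ^ (m+1) ≤ lamP β (β + |h|) ^ (m+1) :=
      pow_le_pow_left₀ (lamM_pos β _ hβ).le (le_trans (lamM_le_lamP β _) hle) (m+1)
    calc Real.exp (h * spin s) *
        (lamP β (h + β * spin s) ^ (m+1) + lamM β (h + β * spin s) ^ (m+1))
        ≤ Real.exp |h| * (lamP β (β + |h|) ^ (m+1) + lamP β (β + |h|) ^ (m+1)) := by
          exact mul_le_mul h1 (add_le_add h2 h3)
            (add_nonneg (pow_nonneg (lamP_pos β _ hβ).le _) (pow_nonneg (lamM_pos β _ hβ).le _))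
            (Real.exp_pos _).le
      _ = 2 * Real.exp |h| * lamP β (β + |h|) ^ (m+1) := by ring
  calc _ ≤ 2 * Real.exp |h| * lamP β (β + |h|) ^ (m+1)
        + 2 * Real.exp |h| * lamP β (β + |h|) ^ (m+1) := add_le_add (key true) (key false)
    _ = 4 * Real.exp |h| * lamP β (β + |h|) ^ (m+1) := by ring

lemma wheelZ_lower (β h : ℝ) (hβ : 0 < β) (m : ℕ) :
    Real.exp (-|h|) * lamP β (β + |h|) ^ (m+1) ≤ wheelZ β h (m+2) := by
  rw [wheelZ_closed, Fintype.sum_bool]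
  have hpos : ∀ s : Bool, 0 ≤ Real.exp (h * spin s) *
      (lamP β (h + β * spin s) ^ (m+1) + lamM β (h + β * spin s) ^ (m+1)) := by
    intro s
    have := (lamP_pos β (h + β * spin s) hβ).le
    have := (lamM_pos β (h + β * spin s) hβ).le
    positivity
  have key : ∃ s : Bool, Real.exp (-|h|) * lamP β (β + |h|) ^ (m+1)
      ≤ Real.exp (h * spin s) *
        (lamP β (h + β * spin s) ^ (m+1) + lamM β (h + β * spin s) ^ (m+1)) := by
    rcases le_or_gt 0 h with hh | hh
    · refine ⟨true, ?_⟩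
      have hfield : h + β * spin true = β + |h| := by
        rw [show spin true = (1:ℝ) from rfl, abs_of_nonneg hh]; ring
      rw [hfield]
      have h1 : Real.exp (-|h|) ≤ Real.exp (h * spin true) := by
        apply Real.exp_le_exp.2
        rw [show spin true = (1:ℝ) from rfl, mul_one]
        exact neg_abs_le h
      have h2 : lamP β (β + |h|) ^ (m+1) ≤ lamP β (β + |h|) ^ (m+1) + lamM β (β + |h|) ^ (m+1) :=
        le_add_of_nonneg_right (pow_nonneg (lamM_pos β _ hβ).le _)
      exact mul_le_mul h1 h2 (pow_nonneg (lamP_pos β _ hβ).le _) (Real.exp_pos _).le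
    · refine ⟨false, ?_⟩
      have hs : spin false = -1 := rfl
      have hfield : h + β * spin false = -(β + |h|) := by
        rw [hs, abs_of_neg hh]; ring
      rw [hfield, lamP_even]
      have h1 : Real.exp (-|h|) ≤ Real.exp (h * spin false) := by
        apply Real.exp_le_exp.2
        rw [hs, abs_of_neg hh]; linarith
      have h2 : lamP β (β + |h|) ^ (m+1) ≤ lamP β (β + |h|) ^ (m+1) + lamM β (-(β + |h|)) ^ (m+1) :=
        le_add_of_nonneg_right (pow_nonneg (lamM_pos β _ hβ).le _)
      exact mul_le_mul h1 h2 (pow_nonneg (lamP_pos β _ hβ).le _) (Real.exp_pos _).le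
  obtain ⟨s, hske⟩ := key
  cases s
  · calc _ ≤ _ := hske
      _ ≤ _ := le_add_of_nonneg_left (hpos true)
  · calc _ ≤ _ := hske
      _ ≤ _ := le_add_of_nonneg_right (hpos false)

end WheelAux

/-- For the Wheel graph, the free entropy density converges:
`lim_{n→∞} (1/n) log Z_n(β,h) = β + log(cosh(β + |h|) + √(sinh²(β + |h|) + e^{-4β}))`. -/
theorem wheel_free_entropy_density (β h : ℝ) (hβ : 0 < β) :
    Tendsto (fun n : ℕ => (1 / (n : ℝ)) * Real.log (wheelZ β h n)) atTop
      (nhds (β + Real.log (Real.cosh (β + |h|) +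
        Real.sqrt (Real.sinh (β + |h|) ^ 2 + Real.exp (-(4 * β)))))) := by
  classical
  set Λ : ℝ := WheelAux.lamP β (β + |h|) with hΛdef
  have hΛ : 0 < Λ := WheelAux.lamP_pos β _ hβ
  set L : ℝ := Real.log Λ with hLdef
  have hcpos : 0 < Real.cosh (β + |h|) + Real.sqrt (Real.sinh (β + |h|) ^ 2 + Real.exp (-(4 * β))) := by
    have h1 := Real.cosh_pos (β + |h|)
    have h2 := Real.sqrt_nonneg (Real.sinh (β + |h|) ^ 2 + Real.exp (-(4 * β)))
    linarith
  have hLval : L = β + Real.log (Real.cosh (β + |h|) +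
      Real.sqrt (Real.sinh (β + |h|) ^ 2 + Real.exp (-(4 * β)))) := by
    rw [hLdef, hΛdef, WheelAux.lamP, Real.log_mul (Real.exp_ne_zero β) hcpos.ne', Real.log_exp]
  rw [← hLval]
  have key : ∀ c : ℝ, Tendsto (fun n : ℕ => (1/(n:ℝ)) * (c + ((n:ℝ) - 1) * L)) atTop (nhds L) := by
    intro c
    have h1 : Tendsto (fun n : ℕ => (c - L)/(n:ℝ) + L) atTop (nhds (0 + L)) :=
      (tendsto_const_div_atTop_nhds_zero_nat (c - L)).add tendsto_const_nhds
    rw [zero_add] at h1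
    apply h1.congr'
    filter_upwards [eventually_gt_atTop 0] with n hn
    have hn' : (n:ℝ) ≠ 0 := Nat.cast_ne_zero.2 hn.ne'
    field_simp
    ring
  apply tendsto_of_tendsto_of_tendsto_of_le_of_le' (key (-|h|)) (key (Real.log (4 * Real.exp |h|)))
  · filter_upwards [eventually_ge_atTop 2] with n hn
    obtain ⟨m, rfl⟩ : ∃ m, n = m + 2 := ⟨n - 2, by omega⟩
    apply mul_le_mul_of_nonneg_left _ (by positivity : (0:ℝ) ≤ 1/((m+2:ℕ):ℝ))
    have heq : -|h| + (((m+2:ℕ):ℝ) - 1) * L = Real.log (Real.exp (-|h|) * Λ ^ (m+1)) := by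
      rw [Real.log_mul (Real.exp_ne_zero _) (pow_ne_zero _ hΛ.ne'), Real.log_exp, Real.log_pow]
      push_cast; ring
    rw [heq]
    exact Real.log_le_log (by positivity) (WheelAux.wheelZ_lower β h hβ m)
  · filter_upwards [eventually_ge_atTop 2] with n hn
    obtain ⟨m, rfl⟩ : ∃ m, n = m + 2 := ⟨n - 2, by omega⟩
    apply mul_le_mul_of_nonneg_left _ (by positivity : (0:ℝ) ≤ 1/((m+2:ℕ):ℝ))
    have heq : Real.log (4 * Real.exp |h|) + (((m+2:ℕ):ℝ) - 1) * L
        = Real.log ((4 * Real.exp |h|) * Λ ^ (m+1)) := by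
      rw [Real.log_mul (by positivity) (pow_ne_zero _ hΛ.ne'), Real.log_pow]
      push_cast; ring
    rw [heq]
    apply Real.log_le_log
    · calc (0:ℝ) < Real.exp (-|h|) * Λ ^ (m+1) := by positivity
        _ ≤ wheelZ β h (m+2) := WheelAux.wheelZ_lower β h hβ m
    · exact WheelAux.wheelZ_upper β h hβ m
end

section
/- For the Curie–Weiss model, the free entropy density converges: lim_{n→∞} (1/n) log Z_n(β,h) = max_{μ ∈ [−1,1]} { hμ + (β/2)μ² + H( (1+μ)/2 ) }, where Z_n(β,h) = ∑_{x ∈ {−1,1}^n} exp( (β/(2n)) (∑_{i=1}^n x_i)² + h ∑_{i=1}^n x_i ) and H(t) = −t log t − (1−t) log(1−t) is the binary entropy function (with H(0) = H(1) = 0). -/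
open Filter Real

/-- Partition function of the Curie–Weiss (Complete graph) Ising model:
`Z_n(β,h) = ∑_{x ∈ {-1,1}^n} exp((β/(2n)) (∑_{i=1}^n x_i)² + h ∑_{i=1}^n x_i)`. -/
noncomputable def cwZ (β h : ℝ) (n : ℕ) : ℝ :=
  ∑ σ : Fin n → Bool,
    Real.exp (β / (2 * n) * (∑ i, spin (σ i)) ^ 2 + h * ∑ i, spin (σ i))

/-- The binary entropy function `H(t) = -t log t - (1-t) log (1-t)` (with the convention
`H(0) = H(1) = 0`, automatic since `Real.log 0 = 0`). -/
noncomputable def binH (t : ℝ) : ℝ := -(t * Real.log t) - (1 - t) * Real.log (1 - t)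

/-!
Grouping configurations by the number `k` of `+1` spins gives
`Z_n = ∑_k C(n,k) exp(n E(2k/n - 1))` with `E(μ) = hμ + βμ²/2`. The entropy bounds
`C(n,k) ≤ exp(n H(k/n)) ≤ (n+1) C(n,k)` (the second because the binomial law with parameter
`k/n` has its mode at `k`) sandwich `Z_n` between `S_n/(n+1)` and `S_n`, where
`S_n = ∑_k exp(n φ(2k/n - 1))` and `φ = E + H((1+·)/2)`. A sum of `n+1` terms `exp(n a_k)` lies
between `exp(n max a)` and `(n+1) exp(n max a)`, and the grid `2k/n - 1` fills `[-1, 1]`, so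
`(1/n) log S_n → max φ` by continuity of `φ`; the factor `n+1` is lost in the limit.
-/

open Finset Topology

/-- `n ^ n` times the probability of `j` under the binomial law `Bin(n, k / n)`. -/
def binomialWeight (n k j : ℕ) : ℕ := n.choose j * k ^ j * (n - k) ^ (n - j)

section BinomialWeight

variable {n k j : ℕ}

theorem binomialWeight_le_succ (hj : j < k) (hk : k ≤ n) :
    binomialWeight n k j ≤ binomialWeight n k (j + 1) := by
  have hchoose : n.choose j * (n - k) ≤ n.choose (j + 1) * k := by
    refine Nat.le_of_mul_le_mul_right ?_ j.succ_pos
    calc n.choose j * (n - k) * (j + 1) ≤ n.choose j * ((n - j) * k) := by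
          rw [mul_assoc]; gcongr; omega
      _ = n.choose (j + 1) * k * (j + 1) := by rw [← mul_assoc, ← Nat.choose_succ_right_eq]; ring
  obtain ⟨m, hm, hm'⟩ : ∃ m, n - j = m + 1 ∧ n - (j + 1) = m := ⟨n - (j + 1), by omega, rfl⟩
  rw [binomialWeight, binomialWeight, hm, hm', pow_succ, pow_succ]
  calc n.choose j * k ^ j * ((n - k) ^ m * (n - k))
      = n.choose j * (n - k) * (k ^ j * (n - k) ^ m) := by ring
    _ ≤ n.choose (j + 1) * k * (k ^ j * (n - k) ^ m) := by gcongr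
    _ = n.choose (j + 1) * (k ^ j * k) * (n - k) ^ m := by ring

theorem binomialWeight_succ_le (hkj : k ≤ j) (hj : j < n) :
    binomialWeight n k (j + 1) ≤ binomialWeight n k j := by
  have hchoose : n.choose (j + 1) * k ≤ n.choose j * (n - k) := by
    refine Nat.le_of_mul_le_mul_right ?_ j.succ_pos
    calc n.choose (j + 1) * k * (j + 1) = n.choose j * ((n - j) * k) := by
          rw [← mul_assoc, ← Nat.choose_succ_right_eq]; ring
      _ ≤ n.choose j * (n - k) * (j + 1) := by rw [mul_assoc]; gcongr; omega
  obtain ⟨m, hm, hm'⟩ : ∃ m, n - j = m + 1 ∧ n - (j + 1) = m := ⟨n - (j + 1), by omega, rfl⟩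
  rw [binomialWeight, binomialWeight, hm, hm', pow_succ, pow_succ]
  calc n.choose (j + 1) * (k ^ j * k) * (n - k) ^ m
      = n.choose (j + 1) * k * (k ^ j * (n - k) ^ m) := by ring
    _ ≤ n.choose j * (n - k) * (k ^ j * (n - k) ^ m) := by gcongr
    _ = n.choose j * k ^ j * ((n - k) ^ m * (n - k)) := by ring

theorem binomialWeight_le_self (hk : k ≤ n) (hj : j ≤ n) :
    binomialWeight n k j ≤ binomialWeight n k k := by
  rcases le_total j k with hjk | hkj
  · have hmono : MonotoneOn (binomialWeight n k) (Set.Iic k) :=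
      monotoneOn_of_le_add_one Set.ordConnected_Iic
        fun i _ _ hi => binomialWeight_le_succ (Nat.lt_of_succ_le hi) hk
    exact hmono hjk (le_refl k) hjk
  · have hanti : AntitoneOn (binomialWeight n k) (Set.Icc k n) :=
      antitoneOn_of_add_one_le Set.ordConnected_Icc
        fun i _ hi hi' => binomialWeight_succ_le hi.1 (Nat.lt_of_succ_le hi'.2)
    exact hanti ⟨le_rfl, hk⟩ ⟨hkj, hj⟩ hkj

theorem sum_binomialWeight (hk : k ≤ n) : ∑ j ∈ range (n + 1), binomialWeight n k j = n ^ n := by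
  conv_rhs => rw [← Nat.add_sub_cancel' hk, add_pow, Nat.add_sub_cancel' hk]
  exact sum_congr rfl fun _ _ => by rw [binomialWeight, Nat.cast_id]; ring

theorem binomialWeight_self_le_pow (hk : k ≤ n) : binomialWeight n k k ≤ n ^ n :=
  sum_binomialWeight hk ▸
    single_le_sum (fun _ _ => Nat.zero_le _) (mem_range.2 (Nat.lt_succ_of_le hk))

theorem pow_le_add_one_mul_binomialWeight_self (hk : k ≤ n) :
    n ^ n ≤ (n + 1) * binomialWeight n k k := by
  calc n ^ n = ∑ j ∈ range (n + 1), binomialWeight n k j := (sum_binomialWeight hk).symm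
    _ ≤ ∑ _j ∈ range (n + 1), binomialWeight n k k :=
        sum_le_sum fun j hj => binomialWeight_le_self hk (Nat.le_of_lt_succ (mem_range.1 hj))
    _ = (n + 1) * binomialWeight n k k := by simp

end BinomialWeight

theorem Real.exp_natCast_mul_log_natCast (k : ℕ) : exp (k * log k) = k ^ k := by
  rcases k.eq_zero_or_pos with rfl | hk
  · simp
  · rw [exp_nat_mul, exp_log (by exact_mod_cast hk)]

theorem Real.mul_div_mul_log_div (x : ℝ) {y : ℝ} (hy : y ≠ 0) :
    y * (x / y * log (x / y)) = x * log x - x * log y := by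
  rcases eq_or_ne x 0 with rfl | hx
  · simp
  · rw [log_div hx hy]; field_simp

theorem natCast_mul_binH_div {n k : ℕ} (hk : k ≤ n) :
    n * binH (k / n) = n * log n - k * log k - (n - k) * log (n - k) := by
  rcases n.eq_zero_or_pos with rfl | hn
  · simp [Nat.le_zero.1 hk]
  have hn' : (n : ℝ) ≠ 0 := by positivity
  have hsub : 1 - (k : ℝ) / n = (n - k) / n := by field_simp
  unfold binH
  rw [hsub]
  linear_combination -mul_div_mul_log_div (k : ℝ) hn' - mul_div_mul_log_div ((n : ℝ) - k) hn'

theorem exp_natCast_mul_binH_div {n k : ℕ} (hk : k ≤ n) :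
    exp (n * binH (k / n)) = (n ^ n : ℕ) / (k ^ k * (n - k) ^ (n - k) : ℕ) := by
  rw [natCast_mul_binH_div hk, exp_sub, exp_sub, ← Nat.cast_sub hk]
  simp only [exp_natCast_mul_log_natCast]
  push_cast
  rw [div_div]

theorem natCast_pow_self_mul_pow_self_pos (k m : ℕ) : (0 : ℝ) < (k ^ k * m ^ m : ℕ) := by
  exact_mod_cast Nat.mul_pos Nat.pow_self_pos Nat.pow_self_pos

theorem choose_le_exp_natCast_mul_binH_div {n k : ℕ} (hk : k ≤ n) :
    (n.choose k : ℝ) ≤ exp (n * binH (k / n)) := by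
  rw [exp_natCast_mul_binH_div hk, le_div_iff₀ (natCast_pow_self_mul_pow_self_pos _ _)]
  exact_mod_cast (mul_assoc _ _ _).symm.trans_le (binomialWeight_self_le_pow hk)

theorem exp_natCast_mul_binH_div_le {n k : ℕ} (hk : k ≤ n) :
    exp (n * binH (k / n)) ≤ (n + 1) * n.choose k := by
  rw [exp_natCast_mul_binH_div hk, div_le_iff₀ (natCast_pow_self_mul_pow_self_pos _ _)]
  exact_mod_cast (pow_le_add_one_mul_binomialWeight_self hk).trans_eq
    (by rw [binomialWeight]; ring)

@[fun_prop]
theorem continuous_binH : Continuous binH := by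
  have : binH = fun t => negMulLog t + negMulLog (1 - t) := by
    funext t; simp only [binH, negMulLog]; ring
  rw [this]
  fun_prop

theorem le_inv_mul_log_sum_exp_mul {ι : Type*} {s : Finset ι} {a : ι → ℝ} {c : ℝ} (hc : 0 < c)
    {j : ι} (hj : j ∈ s) : a j ≤ c⁻¹ * log (∑ i ∈ s, exp (c * a i)) := by
  rw [le_inv_mul_iff₀ hc, ← log_exp (c * a j)]
  exact log_le_log (exp_pos _)
    (single_le_sum (f := fun i => exp (c * a i)) (fun i _ => (exp_pos _).le) hj)

theorem inv_mul_log_sum_exp_mul_le {ι : Type*} {s : Finset ι} {a : ι → ℝ} {c M : ℝ} (hc : 0 < c)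
    (hs : s.Nonempty) (hM : ∀ i ∈ s, a i ≤ M) :
    c⁻¹ * log (∑ i ∈ s, exp (c * a i)) ≤ M + c⁻¹ * log #s := by
  have hsum : ∑ i ∈ s, exp (c * a i) ≤ #s * exp (c * M) :=
    (sum_le_sum fun i hi => exp_le_exp.2 (mul_le_mul_of_nonneg_left (hM i hi) hc.le)).trans_eq
      (by simp)
  calc c⁻¹ * log (∑ i ∈ s, exp (c * a i)) ≤ c⁻¹ * log (#s * exp (c * M)) := by
        gcongr
    _ = M + c⁻¹ * log #s := by
        rw [log_mul (by simp [hs.ne_empty]) (exp_pos _).ne', log_exp]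
        field_simp
        ring

theorem tendsto_inv_mul_log_add_one :
    Tendsto (fun n : ℕ => (n : ℝ)⁻¹ * log (n + 1)) atTop (𝓝 0) := by
  refine ((tendsto_pow_log_div_mul_add_atTop 1 (-1) 1 one_ne_zero).comp
    (tendsto_atTop_add_const_right _ 1 tendsto_natCast_atTop_atTop)).congr fun n => ?_
  simp [div_eq_inv_mul]

/-- The discrete Laplace principle on the grid `k / n` of `[0, 1]`. -/
theorem tendsto_inv_mul_log_sum_exp_mul_grid {g : ℝ → ℝ} (hg : ContinuousOn g (Set.Icc 0 1)) :
    Tendsto (fun n : ℕ => (n : ℝ)⁻¹ * log (∑ k ∈ range (n + 1), exp (n * g (k / n)))) atTop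
      (𝓝 (sSup (g '' Set.Icc 0 1))) := by
  obtain ⟨t, ht, hsup, hmax⟩ :=
    isCompact_Icc.exists_sSup_image_eq_and_ge (Set.nonempty_Icc.2 zero_le_one) hg
  rw [hsup]
  have hgrid (n k : ℕ) (hk : k ≤ n) : (k / n : ℝ) ∈ Set.Icc 0 1 :=
    ⟨by positivity, div_le_one_of_le₀ (by exact_mod_cast hk) n.cast_nonneg⟩
  have hfloor_le (n : ℕ) : ⌊t * n⌋₊ ≤ n :=
    Nat.floor_le_of_le (mul_le_of_le_one_left n.cast_nonneg ht.2)
  have hfloor : Tendsto (fun n : ℕ => (⌊t * n⌋₊ / n : ℝ)) atTop (𝓝[Set.Icc 0 1] t) :=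
    tendsto_nhdsWithin_iff.2 ⟨(tendsto_nat_floor_mul_div_atTop ht.1).comp
      tendsto_natCast_atTop_atTop, Eventually.of_forall fun n => hgrid n _ (hfloor_le n)⟩
  refine tendsto_of_tendsto_of_tendsto_of_le_of_le' ((hg t ht).tendsto.comp hfloor)
    (by simpa using tendsto_const_nhds.add tendsto_inv_mul_log_add_one) ?_ ?_
  · filter_upwards [eventually_gt_atTop 0] with n hn
    exact le_inv_mul_log_sum_exp_mul (a := fun k : ℕ => g (k / n)) (by positivity)
      (mem_range.2 (Nat.lt_succ_of_le (hfloor_le n)))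
  · filter_upwards [eventually_gt_atTop 0] with n hn
    simpa using inv_mul_log_sum_exp_mul_le (a := fun k : ℕ => g (k / n)) (by positivity)
      nonempty_range_add_one fun k hk => hmax _ (hgrid n k (Nat.le_of_lt_succ (mem_range.1 hk)))

theorem tendsto_inv_mul_log_of_le_of_le_add_one_mul {S Z : ℕ → ℝ} {L : ℝ}
    (hS : Tendsto (fun n : ℕ => (n : ℝ)⁻¹ * log (S n)) atTop (𝓝 L)) (hZ : ∀ n, 0 < Z n)
    (hZS : ∀ n, Z n ≤ S n) (hSZ : ∀ n, S n ≤ (n + 1) * Z n) :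
    Tendsto (fun n : ℕ => (n : ℝ)⁻¹ * log (Z n)) atTop (𝓝 L) := by
  refine tendsto_of_tendsto_of_tendsto_of_le_of_le
    (by simpa using hS.sub tendsto_inv_mul_log_add_one) hS (fun n => ?_) (fun n => ?_)
  · have := log_le_log ((hZ n).trans_le (hZS n)) (hSZ n)
    rw [log_mul (by positivity) (hZ n).ne'] at this
    dsimp only
    rw [← mul_sub]
    gcongr
    linarith
  · dsimp only
    gcongr
    exacts [hZ n, hZS n]

noncomputable def cwFunctional (β h μ : ℝ) : ℝ := h * μ + β / 2 * μ ^ 2 + binH ((1 + μ) / 2)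

@[fun_prop]
theorem continuous_cwFunctional (β h : ℝ) : Continuous (cwFunctional β h) := by
  unfold cwFunctional
  fun_prop

theorem sum_spin_decide_mem {n : ℕ} (s : Finset (Fin n)) :
    ∑ i, spin (decide (i ∈ s)) = 2 * #s - n := by
  have hspin (i : Fin n) : spin (decide (i ∈ s)) = 2 * (if i ∈ s then 1 else 0) - 1 := by
    by_cases hi : i ∈ s <;> norm_num [spin, hi]
  simp only [hspin, sum_sub_distrib, ← mul_sum, sum_boole, filter_mem_eq_inter, univ_inter]
  simp

/-- Grouping the configurations by their number `k` of `+1` spins, whose magnetization is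
`2 k / n - 1`. -/
theorem cwZ_eq_sum_choose (β h : ℝ) (n : ℕ) :
    cwZ β h n = ∑ k ∈ range (n + 1),
      n.choose k * exp (n * (h * (2 * (k / n) - 1) + β / 2 * (2 * (k / n) - 1) ^ 2)) := by
  let e : Finset (Fin n) ≃ (Fin n → Bool) :=
    ⟨fun s i => decide (i ∈ s), fun σ => univ.filter (σ · = true), fun s => by ext; simp,
      fun σ => by funext; simp⟩
  rw [cwZ, ← e.sum_comp]
  simp only [e, Equiv.coe_fn_mk, sum_spin_decide_mem]
  rw [← powerset_univ, sum_powerset_apply_card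
    (fun k => exp (β / (2 * n) * (2 * (k : ℝ) - n) ^ 2 + h * (2 * k - n)))]
  refine sum_congr (by simp) fun k hk => ?_
  rw [card_univ, Fintype.card_fin, nsmul_eq_mul]
  congr 2
  rcases eq_or_ne n 0 with rfl | hn
  · simp_all
  · field_simp
    ring

theorem exp_mul_cwFunctional (β h : ℝ) (n k : ℕ) :
    exp (n * cwFunctional β h (2 * (k / n) - 1)) =
      exp (n * binH (k / n)) *
        exp (n * (h * (2 * (k / n) - 1) + β / 2 * (2 * (k / n) - 1) ^ 2)) := by
  rw [← exp_add, cwFunctional, show (1 + (2 * (k / n : ℝ) - 1)) / 2 = k / n by ring]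
  ring_nf

theorem cwZ_pos (β h : ℝ) (n : ℕ) : 0 < cwZ β h n :=
  sum_pos (fun _ _ => exp_pos _) univ_nonempty

theorem cwZ_le_sum_exp (β h : ℝ) (n : ℕ) :
    cwZ β h n ≤ ∑ k ∈ range (n + 1), exp (n * cwFunctional β h (2 * (k / n) - 1)) := by
  rw [cwZ_eq_sum_choose]
  gcongr with k hk
  rw [exp_mul_cwFunctional]
  gcongr
  exact choose_le_exp_natCast_mul_binH_div (Nat.le_of_lt_succ (mem_range.1 hk))

theorem sum_exp_le_add_one_mul_cwZ (β h : ℝ) (n : ℕ) :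
    ∑ k ∈ range (n + 1), exp (n * cwFunctional β h (2 * (k / n) - 1)) ≤ (n + 1) * cwZ β h n := by
  rw [cwZ_eq_sum_choose, mul_sum]
  gcongr with k hk
  rw [exp_mul_cwFunctional, ← mul_assoc]
  gcongr
  exact exp_natCast_mul_binH_div_le (Nat.le_of_lt_succ (mem_range.1 hk))

theorem image_cwFunctional_affine (β h : ℝ) :
    (fun t => cwFunctional β h (2 * t - 1)) '' Set.Icc 0 1 =
      cwFunctional β h '' Set.Icc (-1) 1 := by
  rw [← Set.image_image (cwFunctional β h) (fun t => 2 * t - 1)]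
  simp_rw [sub_eq_add_neg]
  rw [Set.image_affine_Icc' two_pos]
  norm_num

theorem curie_weiss_free_entropy_density_general (β h : ℝ) :
    Tendsto (fun n : ℕ => (1 / (n : ℝ)) * Real.log (cwZ β h n)) atTop
      (nhds (sSup ((fun μ : ℝ => h * μ + β / 2 * μ ^ 2 + binH ((1 + μ) / 2)) ''
        Set.Icc (-1 : ℝ) 1))) := by
  have hgrid := tendsto_inv_mul_log_sum_exp_mul_grid (g := fun t => cwFunctional β h (2 * t - 1))
    (by fun_prop)
  rw [image_cwFunctional_affine] at hgrid
  simp only [one_div]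
  exact tendsto_inv_mul_log_of_le_of_le_add_one_mul hgrid (cwZ_pos β h) (cwZ_le_sum_exp β h)
    (sum_exp_le_add_one_mul_cwZ β h)

/-- For the Curie–Weiss model, the free entropy density converges:
`lim_{n→∞} (1/n) log Z_n(β,h) = max_{μ ∈ [-1,1]} { hμ + (β/2)μ² + H((1+μ)/2) }`. -/
theorem curie_weiss_free_entropy_density (β h : ℝ) (hβ : 0 < β) :
    Tendsto (fun n : ℕ => (1 / (n : ℝ)) * Real.log (cwZ β h n)) atTop
      (nhds (sSup ((fun μ : ℝ => h * μ + β / 2 * μ ^ 2 + binH ((1 + μ) / 2)) ''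
        Set.Icc (-1 : ℝ) 1))) :=
  curie_weiss_free_entropy_density_general β h
end
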